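/- arXiv:2005.08960 — 4 statements merged into one kernel-verified Lean document; each statement's English description precedes it below -/
import Mathlib

section
/- Let a>0, D>0, μ>0, t_s>0, λ>0, p_1∈[0,1], N≥0, r_d>a fixed, and let η≥1 be a natural number. Write h(z)=h_{t_s}(z). Let S be a nonnegative real random variable with E[e^{−ρS}] = exp(−4πλp_1∫_a^∞(1−e^{−ρN h(z)})z² dz) for all ρ>0, and set V = N h(r_d) + S. Let y be an ℕ-valued random variable with P(y=n) = E[V^n e^{−V}]/n! for every n∈ℕ. Then the probability of incorrectly decoding bit 1 satisfies P(y ≤ η−1) = e^{−α_0 − N h(r_d)}·[1 + Σ_{n=1}^{η−1} (1/n!)·B_n(β_1,…,β_n)], where β_1 = α_1 + N h(r_d) and β_i = α_i for i ≥ 2. -/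
open MeasureTheory Real Set Filter Topology
open scoped ENNReal NNReal

/-- Complete exponential Bell polynomials: `bell x n = Bₙ(x 1, …, x n)`. -/
noncomputable def bell (x : ℕ → ℝ) : ℕ → ℝ
  | 0 => 1
  | n + 1 => ∑ k ∈ Finset.range (n + 1), (n.choose k : ℝ) * bell x (n - k) * x (k + 1)

/-- Hitting rate at the surface of a fully absorbing spherical receiver of radius `a`. -/
noncomputable def kappa (a D τ r : ℝ) : ℝ :=
  (a / r) * ((r - a) / Real.sqrt (4 * Real.pi * D * τ ^ 3)) *
    Real.exp (-(r - a) ^ 2 / (4 * D * τ))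

/-- Channel impulse response `h_t(r)` with molecular degradation rate `μ`. -/
noncomputable def cir (a D μ t r : ℝ) : ℝ :=
  ∫ τ in Set.Ioc (0 : ℝ) t, kappa a D τ r * Real.exp (-(μ * τ))

noncomputable def mfun {Ω : Type*} [MeasurableSpace Ω] (P : Measure Ω) (V : Ω → ℝ)
    (n : ℕ) (ρ : ℝ) : ℝ := ∫ ω, V ω ^ n * Real.exp (-(ρ * V ω)) ∂P

noncomputable def cif (A a : ℝ) (u : ℝ → ℝ) (i : ℕ) (ρ : ℝ) : ℝ :=
  A * ∫ z in Set.Ioi a, Real.exp (-(ρ * u z)) * (u z)^i * z^2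

noncomputable def gf (A a c : ℝ) (u : ℝ → ℝ) (i : ℕ) (ρ : ℝ) : ℝ :=
  (if i = 1 then c else 0) + cif A a u i ρ

lemma tsum_pow_div_factorial' (x : ℝ) : ∑' n : ℕ, x ^ n / n.factorial = Real.exp x := by
  rw [Real.exp_eq_exp_ℝ, NormedSpace.exp_eq_tsum_div]


lemma aux_pow_le_exp (m : ℕ) {x : ℝ} (hx : 0 ≤ x) : x ^ m ≤ m.factorial * Real.exp x := by
  have h := Real.sum_le_exp_of_nonneg hx (m+1)
  have h1 : x ^ m / m.factorial ≤ ∑ i ∈ Finset.range (m+1), x ^ i / i.factorial :=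
    Finset.single_le_sum (f := fun i => x ^ i / i.factorial)
      (fun i _ => by positivity) (Finset.self_mem_range_succ m)
  have h2 : x ^ m / m.factorial ≤ Real.exp x := h1.trans h
  have hm : (0:ℝ) < m.factorial := by positivity
  calc x ^ m = (x ^ m / m.factorial) * m.factorial := by field_simp
    _ ≤ Real.exp x * m.factorial := by apply mul_le_mul_of_nonneg_right h2 hm.le
    _ = m.factorial * Real.exp x := mul_comm _ _

lemma aux_pow_mul_exp_le (m : ℕ) {δ x : ℝ} (hδ : 0 < δ) (hx : 0 ≤ x) :
    x ^ m * Real.exp (-(δ * x)) ≤ m.factorial / δ ^ m := by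
  have h := aux_pow_le_exp m (x := δ * x) (by positivity)
  have hexp : (0:ℝ) < Real.exp (δ * x) := Real.exp_pos _
  rw [mul_pow] at h
  have : x ^ m ≤ m.factorial / δ ^ m * Real.exp (δ * x) := by
    rw [div_mul_eq_mul_div, le_div_iff₀ (by positivity)]
    calc x ^ m * δ ^ m = δ ^ m * x ^ m := mul_comm _ _
      _ ≤ m.factorial * Real.exp (δ * x) := h
  calc x ^ m * Real.exp (-(δ * x)) ≤ (m.factorial / δ ^ m * Real.exp (δ * x)) * Real.exp (-(δ*x)) :=
        mul_le_mul_of_nonneg_right this (Real.exp_pos _).le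
    _ = m.factorial / δ ^ m := by rw [mul_assoc, ← Real.exp_add]; simp

lemma aux_one_sub_exp_le {x : ℝ} : 1 - Real.exp (-x) ≤ x := by
  nlinarith [Real.add_one_le_exp (-x)]

lemma aux_one_sub_exp_nonneg {x : ℝ} (hx : 0 ≤ x) : 0 ≤ 1 - Real.exp (-x) := by
  simp only [sub_nonneg]
  exact Real.exp_le_one_iff.mpr (by linarith) |>.trans_eq rfl

lemma aux_exp_neg_le_rpow {y : ℝ} (hy : 0 < y) : Real.exp (-y) ≤ y ^ (-(3:ℝ)/4) := by
  have h1 : y ^ ((3:ℝ)/4) ≤ Real.exp y := by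
    rcases le_total y 1 with h | h
    · calc y ^ ((3:ℝ)/4) ≤ 1 := Real.rpow_le_one hy.le h (by norm_num)
        _ ≤ Real.exp y := by nlinarith [Real.add_one_le_exp y, hy]
    · calc y ^ ((3:ℝ)/4) ≤ y ^ (1:ℝ) := Real.rpow_le_rpow_of_exponent_le h (by norm_num)
        _ = y := Real.rpow_one y
        _ ≤ Real.exp y := by nlinarith [Real.add_one_le_exp y]
  rw [Real.exp_neg]
  rw [show -(3:ℝ)/4 = -((3:ℝ)/4) by ring, Real.rpow_neg hy.le]
  exact inv_anti₀ (by positivity) h1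

lemma kappa_nonneg {a D τ r : ℝ} (ha : 0 < a) (hr : a ≤ r) : 0 ≤ kappa a D τ r := by
  unfold kappa
  have hr0 : (0:ℝ) < r := lt_of_lt_of_le ha hr
  have h1 : 0 ≤ a / r := by positivity
  have h2 : 0 ≤ (r - a) / Real.sqrt (4 * Real.pi * D * τ ^ 3) :=
    div_nonneg (by linarith) (Real.sqrt_nonneg _)
  exact mul_nonneg (mul_nonneg h1 h2) (Real.exp_pos _).le

-- pointwise bound on the integrand
lemma kappa_mul_exp_le {a D μ ts τ z : ℝ} (ha : 0 < a) (hD : 0 < D) (hμ : 0 < μ)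
    (hts : 0 < ts) (hz : a < z) (hτ : τ ∈ Set.Ioc (0:ℝ) ts) :
    kappa a D τ z * Real.exp (-(μ * τ)) ≤
      ((8*D) ^ ((3:ℝ)/4) / Real.sqrt (4 * Real.pi * D)) *
        ((z-a) ^ (-(1:ℝ)/2) * Real.exp (-(z-a)^2 / (8*D*ts))) * τ ^ (-(3:ℝ)/4) := by
  obtain ⟨hτ0, hτts⟩ := hτ
  set x := z - a with hxdef
  have hx : 0 < x := by simp [hxdef]; linarith
  have hz0 : (0:ℝ) < z := by linarith
  -- step 1: drop exp(-μτ) and a/z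
  have step1 : kappa a D τ z * Real.exp (-(μ * τ)) ≤
      (x / Real.sqrt (4 * Real.pi * D * τ ^ 3)) * Real.exp (-x^2 / (4 * D * τ)) := by
    have h1 : kappa a D τ z * Real.exp (-(μ * τ)) ≤ kappa a D τ z :=
      mul_le_of_le_one_right (kappa_nonneg ha hz.le) (Real.exp_le_one_iff.mpr (by nlinarith))
    refine h1.trans ?_
    unfold kappa
    have haz : a / z ≤ 1 := (div_le_one hz0).mpr (by linarith)
    have h2 : 0 ≤ (x / Real.sqrt (4 * Real.pi * D * τ ^ 3)) * Real.exp (-x^2 / (4 * D * τ)) := by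
      have : 0 ≤ x / Real.sqrt (4 * Real.pi * D * τ ^ 3) :=
        div_nonneg hx.le (Real.sqrt_nonneg _)
      positivity
    calc (a / z) * ((z - a) / Real.sqrt (4 * Real.pi * D * τ ^ 3)) * Real.exp (-(z-a)^2 / (4 * D * τ))
        = (a / z) * ((x / Real.sqrt (4 * Real.pi * D * τ ^ 3)) * Real.exp (-x^2 / (4 * D * τ))) := by
          rw [← hxdef]; ring
      _ ≤ 1 * ((x / Real.sqrt (4 * Real.pi * D * τ ^ 3)) * Real.exp (-x^2 / (4 * D * τ))) :=
          mul_le_mul_of_nonneg_right haz h2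
      _ = (x / Real.sqrt (4 * Real.pi * D * τ ^ 3)) * Real.exp (-x^2 / (4 * D * τ)) := one_mul _
  refine step1.trans ?_
  -- step 2: split the exponential
  have hsplit : Real.exp (-x^2 / (4 * D * τ)) ≤
      Real.exp (-(x^2 / (8*D*τ))) * Real.exp (-x^2/(8*D*ts)) := by
    rw [← Real.exp_add]
    apply Real.exp_le_exp.mpr
    have h1 : x^2/(8*D*ts) ≤ x^2/(8*D*τ) := by
      apply div_le_div_of_nonneg_left (by positivity) (by positivity)
      nlinarith
    have : -x^2 / (4*D*τ) = -(x^2/(8*D*τ)) + -(x^2/(8*D*τ)) := by ring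
    rw [this, neg_div]
    linarith
  -- step 3: polynomial bound for the first factor
  have hstep3 : Real.exp (-(x^2 / (8*D*τ))) ≤ (8*D)^((3:ℝ)/4) * τ^((3:ℝ)/4) * x ^ (-(3:ℝ)/2) := by
    have hy : 0 < x^2/(8*D*τ) := by positivity
    refine (aux_exp_neg_le_rpow hy).trans_eq ?_
    rw [div_rpow (by positivity) (by positivity)]
    rw [div_eq_mul_inv, ← Real.rpow_neg (by positivity : (0:ℝ) ≤ 8*D*τ)]
    rw [show ((8:ℝ)*D*τ) = (8*D)*τ by ring, Real.mul_rpow (by positivity) hτ0.le]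
    rw [show -(-(3:ℝ)/4) = (3:ℝ)/4 by ring]
    rw [← Real.rpow_natCast x 2, ← Real.rpow_mul hx.le]
    norm_num
    ring
  -- step 4: sqrt as rpow
  have hsqrt : Real.sqrt (4 * Real.pi * D * τ ^ 3) = Real.sqrt (4 * Real.pi * D) * τ ^ ((3:ℝ)/2) := by
    rw [Real.sqrt_mul (by positivity) (τ^3)]
    congr 1
    rw [Real.sqrt_eq_rpow, ← Real.rpow_natCast τ 3, ← Real.rpow_mul hτ0.le]
    norm_num
  -- rpow algebra
  have hxalg : x * x ^ (-(3:ℝ)/2) = x ^ (-(1:ℝ)/2) := by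
    nth_rewrite 1 [← Real.rpow_one x]
    rw [← Real.rpow_add hx]; norm_num
  have hτalg : τ ^ ((3:ℝ)/4) / τ ^ ((3:ℝ)/2) = τ ^ (-(3:ℝ)/4) := by
    rw [← Real.rpow_sub hτ0]; norm_num
  have hS : (0:ℝ) < Real.sqrt (4 * Real.pi * D) := Real.sqrt_pos.mpr (by positivity)
  have hT : (0:ℝ) < τ ^ ((3:ℝ)/2) := Real.rpow_pos_of_pos hτ0 _
  rw [hsqrt]
  calc x / (Real.sqrt (4 * Real.pi * D) * τ ^ ((3:ℝ)/2)) * Real.exp (-x^2 / (4 * D * τ))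
      ≤ x / (Real.sqrt (4 * Real.pi * D) * τ ^ ((3:ℝ)/2)) *
        (Real.exp (-(x^2 / (8*D*τ))) * Real.exp (-x^2/(8*D*ts))) := by
        apply mul_le_mul_of_nonneg_left hsplit (by positivity)
    _ ≤ x / (Real.sqrt (4 * Real.pi * D) * τ ^ ((3:ℝ)/2)) *
        (((8*D)^((3:ℝ)/4) * τ^((3:ℝ)/4) * x ^ (-(3:ℝ)/2)) * Real.exp (-x^2/(8*D*ts))) := by
        have hnn : (0:ℝ) ≤ x / (Real.sqrt (4 * Real.pi * D) * τ ^ ((3:ℝ)/2)) := by positivity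
        exact mul_le_mul_of_nonneg_left
          (mul_le_mul_of_nonneg_right hstep3 (Real.exp_pos _).le) hnn
    _ = ((8*D) ^ ((3:ℝ)/4) / Real.sqrt (4 * Real.pi * D)) *
        (x ^ (-(1:ℝ)/2) * Real.exp (-x^2 / (8*D*ts))) * τ ^ (-(3:ℝ)/4) := by
        rw [← hxalg, ← hτalg]
        field_simp

noncomputable def Jts (ts : ℝ) : ℝ := ∫ τ in Set.Ioc (0:ℝ) ts, τ ^ (-(3:ℝ)/4)

lemma Jts_integrable {ts : ℝ} (hts : 0 < ts) :
    IntegrableOn (fun τ : ℝ => τ ^ (-(3:ℝ)/4)) (Set.Ioc (0:ℝ) ts) := by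
  have h := intervalIntegral.intervalIntegrable_rpow' (r := -(3:ℝ)/4) (h := by norm_num) (a := 0) (b := ts)
  rw [intervalIntegrable_iff_integrableOn_Ioc_of_le hts.le] at h
  exact h

lemma cir_le {a D μ ts : ℝ} (ha : 0 < a) (hD : 0 < D) (hμ : 0 < μ) (hts : 0 < ts)
    {z : ℝ} (hz : a < z) :
    cir a D μ ts z ≤ ((8*D) ^ ((3:ℝ)/4) / Real.sqrt (4 * Real.pi * D)) * Jts ts *
      ((z-a) ^ (-(1:ℝ)/2) * Real.exp (-(z-a)^2 / (8*D*ts))) := by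
  set C₀ := (8*D) ^ ((3:ℝ)/4) / Real.sqrt (4 * Real.pi * D) with hC₀def
  set W := (z-a) ^ (-(1:ℝ)/2) * Real.exp (-(z-a)^2 / (8*D*ts)) with hWdef
  have hW : 0 ≤ W := by
    have : 0 < z - a := by linarith
    positivity
  have hC₀ : 0 ≤ C₀ := by positivity
  have hbound : ∀ τ ∈ Set.Ioc (0:ℝ) ts,
      kappa a D τ z * Real.exp (-(μ * τ)) ≤ C₀ * W * τ ^ (-(3:ℝ)/4) :=
    fun τ hτ => kappa_mul_exp_le ha hD hμ hts hz hτ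
  have hint_rhs : IntegrableOn (fun τ => C₀ * W * τ ^ (-(3:ℝ)/4)) (Set.Ioc (0:ℝ) ts) :=
    (Jts_integrable hts).const_mul _
  have hmeas : AEStronglyMeasurable (fun τ => kappa a D τ z * Real.exp (-(μ * τ)))
      (volume.restrict (Set.Ioc (0:ℝ) ts)) := by
    apply Measurable.aestronglyMeasurable
    unfold kappa; fun_prop
  have hint_lhs : IntegrableOn (fun τ => kappa a D τ z * Real.exp (-(μ * τ)))
      (Set.Ioc (0:ℝ) ts) := by
    refine hint_rhs.mono' hmeas ?_
    rw [ae_restrict_iff' measurableSet_Ioc]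
    filter_upwards with τ hτ
    rw [Real.norm_eq_abs, abs_of_nonneg (mul_nonneg (kappa_nonneg ha hz.le) (Real.exp_pos _).le)]
    exact hbound τ hτ
  calc cir a D μ ts z ≤ ∫ τ in Set.Ioc (0:ℝ) ts, C₀ * W * τ ^ (-(3:ℝ)/4) :=
        setIntegral_mono_on hint_lhs hint_rhs measurableSet_Ioc hbound
    _ = C₀ * Jts ts * W := by
        rw [MeasureTheory.integral_const_mul]
        unfold Jts
        ring

lemma cir_measurable (a D μ ts : ℝ) : Measurable (fun r => cir a D μ ts r) := by
  have hk : Measurable (fun p : ℝ × ℝ => kappa a D p.2 p.1 * Real.exp (-(μ * p.2))) := by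
    unfold kappa; fun_prop
  exact (hk.stronglyMeasurable.integral_prod_right'
    (ν := volume.restrict (Set.Ioc (0:ℝ) ts))).measurable

lemma cir_nonneg {a D μ ts r : ℝ} (ha : 0 < a) (hr : a ≤ r) : 0 ≤ cir a D μ ts r :=
  setIntegral_nonneg measurableSet_Ioc fun τ _ =>
    mul_nonneg (kappa_nonneg ha hr) (Real.exp_pos _).le

lemma integrableOn_shift {g : ℝ → ℝ} (a : ℝ) (h : IntegrableOn g (Set.Ioi (0:ℝ))) :
    IntegrableOn (fun z => g (z - a)) (Set.Ioi a) := by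
  have key : Integrable (fun z => (Set.Ioi (0:ℝ)).indicator g (z - a)) volume :=
    ((integrable_indicator_iff measurableSet_Ioi).mpr h).comp_sub_right a
  have heq : (Set.Ioi a).indicator (fun z => g (z - a)) =
      fun z => (Set.Ioi (0:ℝ)).indicator g (z - a) := by
    funext z
    by_cases hz : z ∈ Set.Ioi a
    · rw [Set.indicator_of_mem hz, Set.indicator_of_mem (by simp at hz ⊢; linarith)]
    · rw [Set.indicator_of_notMem hz, Set.indicator_of_notMem (by simp at hz ⊢; linarith)]
  exact (integrable_indicator_iff measurableSet_Ioi).mp (heq ▸ key)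

lemma integrable_cir_sq {a D μ ts : ℝ} (ha : 0 < a) (hD : 0 < D) (hμ : 0 < μ) (hts : 0 < ts) :
    IntegrableOn (fun z => cir a D μ ts z * z ^ 2) (Set.Ioi a) := by
  set CB := ((8*D) ^ ((3:ℝ)/4) / Real.sqrt (4 * Real.pi * D)) * Jts ts with hCBdef
  set c8 := (8*D*ts)⁻¹ with hc8def
  have hc8 : 0 < c8 := by positivity
  set G : ℝ → ℝ := fun x => CB * ((x ^ ((3:ℝ)/2) + 2*a*x^((1:ℝ)/2) + a^2 * x^(-(1:ℝ)/2)) *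
    Real.exp (-c8 * x^2)) with hGdef
  have hGint : IntegrableOn G (Set.Ioi (0:ℝ)) := by
    have h1 := integrableOn_rpow_mul_exp_neg_mul_sq hc8 (s := (3:ℝ)/2) (by norm_num)
    have h2 := integrableOn_rpow_mul_exp_neg_mul_sq hc8 (s := (1:ℝ)/2) (by norm_num)
    have h3 := integrableOn_rpow_mul_exp_neg_mul_sq hc8 (s := -(1:ℝ)/2) (by norm_num)
    have : G = fun x => CB * (x ^ ((3:ℝ)/2) * Real.exp (-c8 * x^2)) +
        (CB * (2*a)) * (x ^ ((1:ℝ)/2) * Real.exp (-c8 * x^2)) +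
        (CB * a^2) * (x ^ (-(1:ℝ)/2) * Real.exp (-c8 * x^2)) := by
      funext x; simp only [hGdef]; ring
    rw [this]
    exact ((h1.const_mul CB).add (h2.const_mul _)).add (h3.const_mul _)
  have hGshift : IntegrableOn (fun z => G (z - a)) (Set.Ioi a) := integrableOn_shift a hGint
  refine hGshift.mono' ?_ ?_
  · exact ((cir_measurable a D μ ts).mul (measurable_id.pow_const 2)).aestronglyMeasurable
  · rw [ae_restrict_iff' measurableSet_Ioi]
    filter_upwards with z hz
    simp only [Set.mem_Ioi] at hz
    have hx : 0 < z - a := by linarith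
    have hcir : 0 ≤ cir a D μ ts z := cir_nonneg ha hz.le
    rw [Real.norm_eq_abs, abs_of_nonneg (by positivity)]
    have h1 : cir a D μ ts z * z^2 ≤
        (CB * ((z-a) ^ (-(1:ℝ)/2) * Real.exp (-(z-a)^2 / (8*D*ts)))) * z^2 := by
      apply mul_le_mul_of_nonneg_right _ (by positivity)
      simpa [hCBdef, mul_assoc] using cir_le (μ := μ) ha hD hμ hts hz
    refine h1.trans_eq ?_
    simp only [hGdef]
    have e1 : Real.exp (-(z-a)^2 / (8*D*ts)) = Real.exp (-c8 * (z-a)^2) := by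
      congr 1; rw [hc8def]; field_simp
    have e2 : (z-a) ^ (-(1:ℝ)/2) * z^2 =
        (z-a) ^ ((3:ℝ)/2) + 2*a*(z-a)^((1:ℝ)/2) + a^2 * (z-a)^(-(1:ℝ)/2) := by
      have h1 : (z-a) ^ (-(1:ℝ)/2) * (z-a)^2 = (z-a)^((3:ℝ)/2) := by
        rw [← Real.rpow_natCast (z-a) 2, ← Real.rpow_add hx]
        norm_num
      have h2 : (z-a) ^ (-(1:ℝ)/2) * (z-a) ^ ((1:ℝ)) = (z-a) ^ ((1:ℝ)/2) := by
        rw [← Real.rpow_add hx]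
        norm_num
      rw [Real.rpow_one] at h2
      linear_combination h1 + 2*a*h2
    calc CB * ((z-a) ^ (-(1:ℝ)/2) * Real.exp (-(z-a)^2 / (8*D*ts))) * z^2
        = CB * (((z-a) ^ (-(1:ℝ)/2) * z^2) * Real.exp (-c8 * (z-a)^2)) := by rw [e1]; ring
      _ = CB * (((z-a) ^ ((3:ℝ)/2) + 2*a*(z-a)^((1:ℝ)/2) + a^2 * (z-a)^(-(1:ℝ)/2)) *
          Real.exp (-c8 * (z-a)^2)) := by rw [e2]


lemma aux_hasDerivAt_exp_neg (v x : ℝ) :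
    HasDerivAt (fun x : ℝ => Real.exp (-(x * v))) (-v * Real.exp (-(x * v))) x := by
  have h0 : HasDerivAt (fun x : ℝ => -(x * v)) (-v) x := by
    have := ((hasDerivAt_id' x).mul_const v).neg; simp only [one_mul] at this; exact this
  simpa [mul_comm] using h0.exp

lemma omega_deriv {Ω : Type*} [MeasurableSpace Ω] (P : Measure Ω) [IsProbabilityMeasure P]
    (V : Ω → ℝ) (hVm : Measurable V) (hVnn : ∀ ω, 0 ≤ V ω) (n : ℕ) {ρ : ℝ} (hρ : 0 < ρ) :
    HasDerivAt (fun x => ∫ ω, V ω ^ n * Real.exp (-(x * V ω)) ∂P)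
      (-∫ ω, V ω ^ (n+1) * Real.exp (-(ρ * V ω)) ∂P) ρ := by
  have key := hasDerivAt_integral_of_dominated_loc_of_deriv_le (μ := P) (x₀ := ρ)
    (F := fun x ω => V ω ^ n * Real.exp (-(x * V ω)))
    (F' := fun x ω => -(V ω ^ (n+1) * Real.exp (-(x * V ω))))
    (bound := fun _ => ((n+1).factorial : ℝ) / (ρ/2) ^ (n+1))
    (Metric.ball_mem_nhds ρ (half_pos hρ))
    (Eventually.of_forall fun x => (((hVm.pow_const n).mul
      (((measurable_const.mul hVm).neg).exp)).aestronglyMeasurable))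
    ?_ ?_ ?_ ?_ ?_
  · have : (∫ ω, -(V ω ^ (n+1) * Real.exp (-(ρ * V ω))) ∂P) =
        -∫ ω, V ω ^ (n+1) * Real.exp (-(ρ * V ω)) ∂P := integral_neg _
    rw [this] at key
    exact key.2
  · -- integrability at ρ
    apply Integrable.mono' (integrable_const ((n.factorial : ℝ) / ρ ^ n))
    · exact ((hVm.pow_const n).mul
        (((measurable_const.mul hVm).neg).exp)).aestronglyMeasurable
    · filter_upwards with ω
      rw [Real.norm_eq_abs,
        abs_of_nonneg (mul_nonneg (pow_nonneg (hVnn ω) _) (Real.exp_pos _).le)]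
      exact aux_pow_mul_exp_le n hρ (hVnn ω)
  · exact (((hVm.pow_const (n+1)).mul
      (((measurable_const.mul hVm).neg).exp)).neg).aestronglyMeasurable
  · -- bound
    filter_upwards with ω x hx
    rw [Real.norm_eq_abs, abs_neg,
      abs_of_nonneg (mul_nonneg (pow_nonneg (hVnn ω) _) (Real.exp_pos _).le)]
    have hx2 : ρ/2 ≤ x := by
      rw [Metric.mem_ball, Real.dist_eq, abs_lt] at hx
      linarith [hx.1]
    calc V ω ^ (n+1) * Real.exp (-(x * V ω))
        ≤ V ω ^ (n+1) * Real.exp (-(ρ/2 * V ω)) := by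
          apply mul_le_mul_of_nonneg_left _ (pow_nonneg (hVnn ω) _)
          apply Real.exp_le_exp.mpr
          have := hVnn ω
          nlinarith
      _ ≤ ((n+1).factorial : ℝ) / (ρ/2) ^ (n+1) :=
          aux_pow_mul_exp_le (n+1) (half_pos hρ) (hVnn ω)
  · exact integrable_const _
  · -- differentiability
    filter_upwards with ω x _
    have := (aux_hasDerivAt_exp_neg (V ω) x).const_mul (V ω ^ n)
    refine this.congr_deriv ?_
    ring

lemma z_deriv_pos (a : ℝ) (u : ℝ → ℝ) (hu : Measurable u) (hunn : ∀ z ∈ Set.Ioi a, 0 ≤ u z)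
    (hint : IntegrableOn (fun z => u z * z^2) (Set.Ioi a)) (i : ℕ) {ρ : ℝ} (hρ : 0 < ρ) :
    HasDerivAt (fun x => ∫ z in Set.Ioi a, Real.exp (-(x * u z)) * (u z)^(i+1) * z^2)
      (-∫ z in Set.Ioi a, Real.exp (-(ρ * u z)) * (u z)^(i+2) * z^2) ρ := by
  have hm : ∀ x : ℝ, AEStronglyMeasurable (fun z => Real.exp (-(x * u z)) * (u z)^(i+1) * z^2)
      (volume.restrict (Set.Ioi a)) := fun x => by
    apply Measurable.aestronglyMeasurable; fun_prop
  have hunn' : ∀ᵐ z ∂(volume.restrict (Set.Ioi a)), 0 ≤ u z := by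
    rw [ae_restrict_iff' measurableSet_Ioi]
    exact Eventually.of_forall hunn
  have key := hasDerivAt_integral_of_dominated_loc_of_deriv_le
    (μ := volume.restrict (Set.Ioi a)) (x₀ := ρ)
    (F := fun x z => Real.exp (-(x * u z)) * (u z)^(i+1) * z^2)
    (F' := fun x z => -(Real.exp (-(x * u z)) * (u z)^(i+2) * z^2))
    (bound := fun z => ((i+1).factorial : ℝ) / (ρ/2) ^ (i+1) * (u z * z^2))
    (Metric.ball_mem_nhds ρ (half_pos hρ)) (Eventually.of_forall hm) ?_ ?_ ?_ ?_ ?_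
  · rw [integral_neg] at key
    exact key.2
  · -- integrability at ρ
    apply (hint.const_mul ((i.factorial : ℝ) / ρ ^ i)).mono' (hm ρ)
    rw [ae_restrict_iff' measurableSet_Ioi]
    filter_upwards with z hz
    have h0 := hunn z hz
    rw [Real.norm_eq_abs, abs_of_nonneg (by positivity)]
    calc Real.exp (-(ρ * u z)) * (u z)^(i+1) * z^2
        = ((u z)^i * Real.exp (-(ρ * u z))) * (u z * z^2) := by ring
      _ ≤ ((i.factorial : ℝ) / ρ ^ i) * (u z * z^2) := by
          apply mul_le_mul_of_nonneg_right (aux_pow_mul_exp_le i hρ h0) (by positivity)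
  · apply Measurable.aestronglyMeasurable; fun_prop
  · -- bound
    rw [ae_restrict_iff' measurableSet_Ioi]
    filter_upwards with z hz x hx
    have h0 := hunn z hz
    rw [Real.norm_eq_abs, abs_neg, abs_of_nonneg (by positivity)]
    have hx2 : ρ/2 ≤ x := by
      rw [Metric.mem_ball, Real.dist_eq, abs_lt] at hx
      linarith [hx.1]
    calc Real.exp (-(x * u z)) * (u z)^(i+2) * z^2
        = ((u z)^(i+1) * Real.exp (-(x * u z))) * (u z * z^2) := by ring
      _ ≤ ((u z)^(i+1) * Real.exp (-(ρ/2 * u z))) * (u z * z^2) := by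
          apply mul_le_mul_of_nonneg_right _ (by positivity)
          apply mul_le_mul_of_nonneg_left _ (pow_nonneg h0 _)
          apply Real.exp_le_exp.mpr
          nlinarith
      _ ≤ ((i+1).factorial / (ρ/2) ^ (i+1)) * (u z * z^2) := by
          apply mul_le_mul_of_nonneg_right
            (aux_pow_mul_exp_le (i+1) (half_pos hρ) h0) (by positivity)
  · exact hint.const_mul _
  · -- differentiability
    filter_upwards with z x _
    have := ((aux_hasDerivAt_exp_neg (u z) x).mul_const ((u z)^(i+1))).mul_const (z^2)
    refine this.congr_deriv ?_
    ring

lemma z_deriv_zero (a : ℝ) (u : ℝ → ℝ) (hu : Measurable u) (hunn : ∀ z ∈ Set.Ioi a, 0 ≤ u z)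
    (hint : IntegrableOn (fun z => u z * z^2) (Set.Ioi a)) {ρ : ℝ} (hρ : 0 < ρ) :
    HasDerivAt (fun x => ∫ z in Set.Ioi a, (1 - Real.exp (-(x * u z))) * z^2)
      (∫ z in Set.Ioi a, Real.exp (-(ρ * u z)) * (u z)^1 * z^2) ρ := by
  have hm : ∀ x : ℝ, AEStronglyMeasurable (fun z => (1 - Real.exp (-(x * u z))) * z^2)
      (volume.restrict (Set.Ioi a)) := fun x => by
    apply Measurable.aestronglyMeasurable; fun_prop
  have key := hasDerivAt_integral_of_dominated_loc_of_deriv_le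
    (μ := volume.restrict (Set.Ioi a)) (x₀ := ρ)
    (F := fun x z => (1 - Real.exp (-(x * u z))) * z^2)
    (F' := fun x z => Real.exp (-(x * u z)) * (u z)^1 * z^2)
    (bound := fun z => u z * z^2)
    (Metric.ball_mem_nhds ρ (half_pos hρ)) (Eventually.of_forall hm) ?_ ?_ ?_ ?_ ?_
  · exact key.2
  · apply (hint.const_mul ρ).mono' (hm ρ)
    rw [ae_restrict_iff' measurableSet_Ioi]
    filter_upwards with z hz
    have h0 := hunn z hz
    have h1 : 0 ≤ 1 - Real.exp (-(ρ * u z)) := by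
      have : Real.exp (-(ρ * u z)) ≤ 1 := Real.exp_le_one_iff.mpr (by nlinarith)
      linarith
    rw [Real.norm_eq_abs, abs_of_nonneg (by positivity)]
    calc (1 - Real.exp (-(ρ * u z))) * z^2 ≤ (ρ * u z) * z^2 := by
          apply mul_le_mul_of_nonneg_right _ (by positivity)
          simpa using aux_one_sub_exp_le (x := ρ * u z)
      _ = ρ * (u z * z^2) := by ring
  · apply Measurable.aestronglyMeasurable; fun_prop
  · rw [ae_restrict_iff' measurableSet_Ioi]
    filter_upwards with z hz x hx
    have h0 := hunn z hz
    rw [Real.norm_eq_abs, abs_of_nonneg (by positivity)]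
    have hx2 : 0 < x := by
      rw [Metric.mem_ball, Real.dist_eq, abs_lt] at hx
      linarith [hx.1, half_pos hρ]
    calc Real.exp (-(x * u z)) * (u z)^1 * z^2 ≤ 1 * (u z)^1 * z^2 := by
          apply mul_le_mul_of_nonneg_right _ (by positivity)
          apply mul_le_mul_of_nonneg_right _ (by positivity)
          exact Real.exp_le_one_iff.mpr (by nlinarith)
      _ = u z * z^2 := by ring
  · exact hint
  · filter_upwards with z x _
    have h1 : HasDerivAt (fun x : ℝ => (1 - Real.exp (-(x * u z)))) (u z * Real.exp (-(x * u z))) x := by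
      have := (aux_hasDerivAt_exp_neg (u z) x).const_sub 1
      simpa using this
    have := h1.mul_const (z^2)
    refine this.congr_deriv ?_
    ring


lemma pascal_step (n : ℕ) (G M : ℕ → ℝ) :
    (∑ k ∈ Finset.range (n+1), ((n.choose k : ℝ) * G (k+2) * M (n-k)
      + (n.choose k : ℝ) * G (k+1) * M (n-k+1)))
    = ∑ k ∈ Finset.range (n+2), (((n+1).choose k : ℝ) * G (k+1) * M (n+1-k)) := by
  rw [Finset.sum_add_distrib]
  rw [Finset.sum_range_succ' (fun k => (((n+1).choose k : ℝ) * G (k+1) * M (n+1-k))) (n+1)]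
  have e1 : ∀ k ∈ Finset.range (n+1),
      (((n+1).choose (k+1) : ℝ) * G (k+1+1) * M (n+1-(k+1)))
      = (n.choose k : ℝ) * G (k+2) * M (n-k) + (n.choose (k+1) : ℝ) * G (k+2) * M (n-k) := by
    intro k _
    rw [Nat.choose_succ_succ, Nat.succ_sub_succ]
    push_cast
    ring
  rw [Finset.sum_congr rfl e1, Finset.sum_add_distrib]
  have e2 : ∑ k ∈ Finset.range (n+1), (n.choose k : ℝ) * G (k+1) * M (n-k+1)
      = ∑ k ∈ Finset.range (n+1), (n.choose (k+1) : ℝ) * G (k+2) * M (n-k)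
        + (((n+1).choose 0 : ℝ) * G (0+1) * M (n+1-0)) := by
    rw [Finset.sum_range_succ' (fun k => ((n.choose k : ℝ) * G (k+1) * M (n-k+1))) n]
    rw [Finset.sum_range_succ (fun k => ((n.choose (k+1) : ℝ) * G (k+2) * M (n-k))) n]
    have e3 : ∀ k ∈ Finset.range n, (n.choose (k+1) : ℝ) * G (k+1+1) * M (n-(k+1)+1)
        = (n.choose (k+1) : ℝ) * G (k+2) * M (n-k) := by
      intro k hk
      rw [Finset.mem_range] at hk
      congr 2
      omega
    rw [Finset.sum_congr rfl e3]
    simp [Nat.choose_succ_self]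
  rw [e2]
  ring

lemma moment_rec {Ω : Type*} [MeasurableSpace Ω] (P : Measure Ω) [IsProbabilityMeasure P]
    (V : Ω → ℝ) (hVm : Measurable V) (hVnn : ∀ ω, 0 ≤ V ω)
    (A a c : ℝ) (u : ℝ → ℝ) (hu : Measurable u) (hunn : ∀ z ∈ Set.Ioi a, 0 ≤ u z)
    (hint : IntegrableOn (fun z => u z * z^2) (Set.Ioi a))
    (hm0 : ∀ ρ : ℝ, 0 < ρ → mfun P V 0 ρ =
        Real.exp (-(ρ*c) - A * ∫ z in Set.Ioi a, (1 - Real.exp (-(ρ * u z))) * z^2)) :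
    ∀ n : ℕ, ∀ ρ : ℝ, 0 < ρ →
      mfun P V (n+1) ρ = ∑ k ∈ Finset.range (n+1),
        (n.choose k : ℝ) * gf A a c u (k+1) ρ * mfun P V (n-k) ρ := by
  have hm_deriv : ∀ (n : ℕ) {ρ : ℝ}, 0 < ρ → HasDerivAt (mfun P V n) (-mfun P V (n+1) ρ) ρ :=
    fun n ρ hρ => omega_deriv P V hVm hVnn n hρ
  have hci_deriv : ∀ (i : ℕ) {ρ : ℝ}, 0 < ρ →
      HasDerivAt (cif A a u (i+1)) (-(cif A a u (i+2) ρ)) ρ := by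
    intro i ρ hρ
    have h := (z_deriv_pos a u hu hunn hint i hρ).const_mul A
    have e : A * -∫ z in Set.Ioi a, Real.exp (-(ρ * u z)) * (u z)^(i+2) * z^2
        = -(cif A a u (i+2) ρ) := by rw [cif]; ring
    rw [e] at h
    exact h
  have hg_deriv : ∀ (k : ℕ) {ρ : ℝ}, 0 < ρ →
      HasDerivAt (gf A a c u (k+1)) (-(gf A a c u (k+2) ρ)) ρ := by
    intro k ρ hρ
    have h := (hci_deriv k hρ).const_add (if k+1 = 1 then c else 0)
    have e : -(cif A a u (k+2) ρ) = -(gf A a c u (k+2) ρ) := by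
      rw [gf]; simp
    rw [e] at h
    exact h
  intro n
  induction n with
  | zero =>
    intro ρ hρ
    have hc0d : HasDerivAt (fun x => A * ∫ z in Set.Ioi a, (1 - Real.exp (-(x * u z))) * z^2)
        (cif A a u 1 ρ) ρ := by
      have := (z_deriv_zero a u hu hunn hint hρ).const_mul A
      exact this
    have hEd : HasDerivAt
        (fun x => Real.exp (-(x*c) - A * ∫ z in Set.Ioi a, (1 - Real.exp (-(x * u z))) * z^2))
        (-(gf A a c u 1 ρ) *
          Real.exp (-(ρ*c) - A * ∫ z in Set.Ioi a, (1 - Real.exp (-(ρ * u z))) * z^2)) ρ := by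
      have h1 : HasDerivAt (fun x : ℝ => -(x*c)) (-c) ρ := by
        have := ((hasDerivAt_id' ρ).mul_const c).neg; simp only [one_mul] at this; exact this
      have hinner := h1.sub hc0d
      have e : -c - cif A a u 1 ρ = -(gf A a c u 1 ρ) := by rw [gf]; simp; ring
      rw [e] at hinner
      simpa [mul_comm] using hinner.exp
    have hEq : (fun x => Real.exp (-(x*c) - A * ∫ z in Set.Ioi a,
        (1 - Real.exp (-(x * u z))) * z^2)) =ᶠ[𝓝 ρ] mfun P V 0 := by
      filter_upwards [Ioi_mem_nhds hρ] with x hx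
      exact (hm0 x hx).symm
    have hD0 : HasDerivAt (mfun P V 0)
        (-(gf A a c u 1 ρ) *
          Real.exp (-(ρ*c) - A * ∫ z in Set.Ioi a, (1 - Real.exp (-(ρ * u z))) * z^2)) ρ :=
      hEd.congr_of_eventuallyEq hEq.symm
    have huniq := (hm_deriv 0 hρ).unique hD0
    rw [Finset.sum_range_one]
    have hm00 := hm0 ρ hρ
    simp only [Nat.choose_zero_right, Nat.cast_one, one_mul, Nat.zero_sub]
    rw [hm00]
    linear_combination -huniq
  | succ n ih =>
    intro ρ hρ
    set f : ℝ → ℝ := fun x => ∑ k ∈ Finset.range (n+1),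
      (n.choose k : ℝ) * gf A a c u (k+1) x * mfun P V (n-k) x with hf
    have hR : HasDerivAt f
        (∑ k ∈ Finset.range (n+1), ((n.choose k : ℝ) * (-(gf A a c u (k+2) ρ)) * mfun P V (n-k) ρ
          + (n.choose k : ℝ) * gf A a c u (k+1) ρ * (-(mfun P V (n-k+1) ρ)))) ρ := by
      apply HasDerivAt.fun_sum
      intro k _
      have h1 := ((hg_deriv k hρ).mul (hm_deriv (n-k) hρ)).const_mul ((n.choose k : ℝ))
      have e : (fun x => (n.choose k : ℝ) * gf A a c u (k+1) x * mfun P V (n-k) x)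
          = fun x => (n.choose k : ℝ) * (gf A a c u (k+1) x * mfun P V (n-k) x) := by
        funext x; ring
      rw [e]
      refine h1.congr_deriv ?_
      ring
    have hEq : mfun P V (n+1) =ᶠ[𝓝 ρ] f := by
      filter_upwards [Ioi_mem_nhds hρ] with x hx
      exact ih x hx
    have hR' : HasDerivAt (mfun P V (n+1))
        (∑ k ∈ Finset.range (n+1), ((n.choose k : ℝ) * (-(gf A a c u (k+2) ρ)) * mfun P V (n-k) ρ
          + (n.choose k : ℝ) * gf A a c u (k+1) ρ * (-(mfun P V (n-k+1) ρ)))) ρ :=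
      hR.congr_of_eventuallyEq hEq
    have huniq := (hm_deriv (n+1) hρ).unique hR'
    have key : mfun P V (n+1+1) ρ = ∑ k ∈ Finset.range (n+1),
        ((n.choose k : ℝ) * gf A a c u (k+2) ρ * mfun P V (n-k) ρ
          + (n.choose k : ℝ) * gf A a c u (k+1) ρ * mfun P V (n-k+1) ρ) := by
      have h2 : ∑ k ∈ Finset.range (n+1),
          ((n.choose k : ℝ) * (-(gf A a c u (k+2) ρ)) * mfun P V (n-k) ρ
            + (n.choose k : ℝ) * gf A a c u (k+1) ρ * (-(mfun P V (n-k+1) ρ)))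
          = -∑ k ∈ Finset.range (n+1),
            ((n.choose k : ℝ) * gf A a c u (k+2) ρ * mfun P V (n-k) ρ
              + (n.choose k : ℝ) * gf A a c u (k+1) ρ * mfun P V (n-k+1) ρ) := by
        rw [← Finset.sum_neg_distrib]
        exact Finset.sum_congr rfl fun k _ => by ring
      rw [h2] at huniq
      linarith [huniq]
    rw [key]
    exact pascal_step n (fun i => gf A a c u i ρ) (fun i => mfun P V i ρ)

lemma moment_eq_bell {Ω : Type*} [MeasurableSpace Ω] (P : Measure Ω) [IsProbabilityMeasure P]
    (V : Ω → ℝ) (hVm : Measurable V) (hVnn : ∀ ω, 0 ≤ V ω)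
    (A a c : ℝ) (u : ℝ → ℝ) (hu : Measurable u) (hunn : ∀ z ∈ Set.Ioi a, 0 ≤ u z)
    (hint : IntegrableOn (fun z => u z * z^2) (Set.Ioi a))
    (hm0 : ∀ ρ : ℝ, 0 < ρ → mfun P V 0 ρ =
        Real.exp (-(ρ*c) - A * ∫ z in Set.Ioi a, (1 - Real.exp (-(ρ * u z))) * z^2)) :
    ∀ n : ℕ, mfun P V n 1 = mfun P V 0 1 * bell (fun k => gf A a c u k 1) n := by
  have hrec := moment_rec P V hVm hVnn A a c u hu hunn hint hm0
  intro n
  induction n using Nat.strong_induction_on with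
  | _ n ih =>
    match n with
    | 0 => simp [bell]
    | Nat.succ n =>
      rw [hrec n 1 one_pos]
      show _ = mfun P V 0 1 * bell (fun k => gf A a c u k 1) (n+1)
      rw [bell, Finset.mul_sum]
      apply Finset.sum_congr rfl
      intro k hk
      rw [ih (n-k) (by omega)]
      ring

/-- Probability of incorrect decoding of bit 1 when the tagged TBN is at a
fixed distance `r_d` (Theorem 1, eq. (13)). -/
theorem bit1_error_probability_fixed_distance {Ω : Type*} [MeasurableSpace Ω] (P : Measure Ω)
    [IsProbabilityMeasure P]
    (a D μ ts lam p₁ N rd : ℝ) (η : ℕ)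
    (ha : 0 < a) (hD : 0 < D) (hμ : 0 < μ) (hts : 0 < ts) (hlam : 0 < lam)
    (hp₁ : p₁ ∈ Set.Icc (0 : ℝ) 1) (hN : 0 ≤ N) (hrd : a < rd) (hη : 1 ≤ η)
    (S : Ω → ℝ) (hSnn : ∀ ω, 0 ≤ S ω) (hSm : Measurable S)
    (hLap : ∀ ρ : ℝ, 0 < ρ →
      ∫ ω, Real.exp (-(ρ * S ω)) ∂P =
        Real.exp (-(4 * Real.pi * lam * p₁ *
          ∫ z in Set.Ioi a, (1 - Real.exp (-(ρ * N * cir a D μ ts z))) * z ^ 2)))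
    (V : Ω → ℝ) (hV : ∀ ω, V ω = N * cir a D μ ts rd + S ω)
    (y : Ω → ℕ)
    (hy : ∀ n : ℕ, (P {ω | y ω = n}).toReal =
      (∫ ω, (V ω) ^ n * Real.exp (-V ω) ∂P) / n.factorial) :
    (P {ω | y ω ≤ η - 1}).toReal =
      Real.exp (-(4 * Real.pi * lam * p₁ *
            ∫ z in Set.Ioi a, (1 - Real.exp (-(N * cir a D μ ts z))) * z ^ 2)
          - N * cir a D μ ts rd) *
        (1 + ∑ n ∈ Finset.Icc 1 (η - 1), (1 / (n.factorial : ℝ)) *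
          bell (fun i =>
            (if i = 1 then N * cir a D μ ts rd else 0) +
            4 * Real.pi * lam * p₁ *
              ∫ z in Set.Ioi a,
                Real.exp (-(N * cir a D μ ts z)) * (N * cir a D μ ts z) ^ i * z ^ 2) n) := by
  -- basic objects
  set A : ℝ := 4 * Real.pi * lam * p₁ with hA
  set c : ℝ := N * cir a D μ ts rd with hcdef
  set u : ℝ → ℝ := fun z => N * cir a D μ ts z with hudef
  have hu_meas : Measurable u := (cir_measurable a D μ ts).const_mul N
  have hu_nn : ∀ z ∈ Set.Ioi a, 0 ≤ u z := fun z hz =>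
    mul_nonneg hN (cir_nonneg ha (le_of_lt hz))
  have hu_int : IntegrableOn (fun z => u z * z^2) (Set.Ioi a) := by
    have h := (integrable_cir_sq ha hD hμ hts).const_mul N
    have e : (fun z => N * (cir a D μ ts z * z^2)) = fun z => u z * z^2 := by
      funext z; simp only [hudef]; ring
    rwa [e] at h
  have hVm : Measurable V := by
    have : V = fun ω => c + S ω := funext hV
    rw [this]; exact measurable_const.add hSm
  have hVnn : ∀ ω, 0 ≤ V ω := fun ω => by
    rw [hV ω]
    exact add_nonneg (mul_nonneg hN (cir_nonneg ha hrd.le)) (hSnn ω)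
  -- the Laplace transform of V
  have hm0 : ∀ ρ : ℝ, 0 < ρ → mfun P V 0 ρ =
      Real.exp (-(ρ*c) - A * ∫ z in Set.Ioi a, (1 - Real.exp (-(ρ * u z))) * z^2) := by
    intro ρ hρ
    have h1 : (fun ω => V ω ^ 0 * Real.exp (-(ρ * V ω)))
        = fun ω => Real.exp (-(ρ * c)) * Real.exp (-(ρ * S ω)) := by
      funext ω
      rw [hV ω, pow_zero, one_mul, ← Real.exp_add]
      congr 1
      simp only [hcdef]; ring
    rw [mfun, h1, integral_const_mul, hLap ρ hρ, ← Real.exp_add]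
    congr 1
    have e2 : ∀ z : ℝ, ρ * N * cir a D μ ts z = ρ * u z := fun z => by
      simp only [hudef]; ring
    simp only [e2, hA]
    ring
  have hbell := moment_eq_bell P V hVm hVnn A a c u hu_meas hu_nn hu_int hm0
  -- identification of the bell argument
  have hβ : (fun k => gf A a c u k 1) = (fun i =>
      (if i = 1 then c else 0) +
      A * ∫ z in Set.Ioi a,
          Real.exp (-(N * cir a D μ ts z)) * (N * cir a D μ ts z) ^ i * z ^ 2) := by
    funext k
    rw [gf, cif]
    simp only [one_mul, hudef]
  -- m n 1 as the moments in hy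
  have hm1 : ∀ n : ℕ, mfun P V n 1 = ∫ ω, V ω ^ n * Real.exp (-V ω) ∂P := by
    intro n
    rw [mfun]
    simp only [one_mul]
  -- integrability of the moments
  have hint_n : ∀ n : ℕ, Integrable (fun ω => V ω ^ n * Real.exp (-V ω)) P := by
    intro n
    apply Integrable.mono' (integrable_const ((n.factorial : ℝ) / 1 ^ n))
    · exact ((hVm.pow_const n).mul (hVm.neg.exp)).aestronglyMeasurable
    · filter_upwards with ω
      rw [Real.norm_eq_abs,
        abs_of_nonneg (mul_nonneg (pow_nonneg (hVnn ω) _) (Real.exp_pos _).le)]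
      have := aux_pow_mul_exp_le n one_pos (hVnn ω)
      simpa using this
  -- the total mass is 1
  have hs_tsum : ∑' n : ℕ, P {ω | y ω = n} = 1 := by
    have hF : ∀ n : ℕ, ∫⁻ ω, ENNReal.ofReal (V ω ^ n * Real.exp (-V ω) / n.factorial) ∂P
        = P {ω | y ω = n} := by
      intro n
      have hi : Integrable (fun ω => V ω ^ n * Real.exp (-V ω) / n.factorial) P :=
        (hint_n n).div_const _
      have hnn : 0 ≤ᵐ[P] fun ω => V ω ^ n * Real.exp (-V ω) / n.factorial :=
        Eventually.of_forall fun ω =>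
          div_nonneg (mul_nonneg (pow_nonneg (hVnn ω) _) (Real.exp_pos _).le) (by positivity)
      rw [← ofReal_integral_eq_lintegral_ofReal hi hnn, integral_div, ← hy n]
      exact ENNReal.ofReal_toReal (measure_ne_top P _)
    have hmeas : ∀ n : ℕ, AEMeasurable
        (fun ω => ENNReal.ofReal (V ω ^ n * Real.exp (-V ω) / n.factorial)) P := by
      intro n
      exact ((((hVm.pow_const n).mul (hVm.neg.exp)).div_const _).ennreal_ofReal).aemeasurable
    have hpt : ∀ ω, (∑' n : ℕ, ENNReal.ofReal (V ω ^ n * Real.exp (-V ω) / n.factorial)) = 1 := by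
      intro ω
      have hnn' : ∀ n : ℕ, 0 ≤ V ω ^ n * Real.exp (-V ω) / n.factorial := fun n =>
        div_nonneg (mul_nonneg (pow_nonneg (hVnn ω) _) (Real.exp_pos _).le) (by positivity)
      have he : (fun n : ℕ => V ω ^ n * Real.exp (-V ω) / n.factorial)
          = fun n : ℕ => (V ω ^ n / n.factorial) * Real.exp (-V ω) := by
        funext n; ring
      have hsummable : Summable (fun n : ℕ => V ω ^ n * Real.exp (-V ω) / n.factorial) := by
        rw [he]
        exact (Real.summable_pow_div_factorial (V ω)).mul_right _
      rw [← ENNReal.ofReal_tsum_of_nonneg hnn' hsummable]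
      have : (∑' n : ℕ, V ω ^ n * Real.exp (-V ω) / n.factorial) = 1 := by
        rw [he, tsum_mul_right, tsum_pow_div_factorial', ← Real.exp_add]
        simp
      rw [this, ENNReal.ofReal_one]
    calc ∑' n : ℕ, P {ω | y ω = n}
        = ∑' n : ℕ, ∫⁻ ω, ENNReal.ofReal (V ω ^ n * Real.exp (-V ω) / n.factorial) ∂P := by
          exact (tsum_congr hF).symm
      _ = ∫⁻ ω, ∑' n : ℕ, ENNReal.ofReal (V ω ^ n * Real.exp (-V ω) / n.factorial) ∂P :=
          (lintegral_tsum hmeas).symm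
      _ = ∫⁻ _, 1 ∂P := by
          congr 1
          funext ω
          exact hpt ω
      _ = 1 := by simp
  -- partition argument
  have hfinal : P {ω | y ω ≤ η - 1} = ∑ n ∈ Finset.range η, P {ω | y ω = n} := by
    have hsub1 : {ω | y ω ≤ η - 1} ⊆ ⋃ n ∈ Finset.range η, {ω | y ω = n} := by
      intro ω hω
      simp only [mem_setOf_eq] at hω
      exact Set.mem_biUnion (Finset.mem_range.mpr (by omega)) rfl
    have h1 : P {ω | y ω ≤ η - 1} ≤ ∑ n ∈ Finset.range η, P {ω | y ω = n} :=
      (measure_mono hsub1).trans (measure_biUnion_finset_le _ _)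
    have hsub2 : {ω | y ω ≤ η - 1}ᶜ ⊆ ⋃ k : ℕ, {ω | y ω = k + η} := by
      intro ω hω
      simp only [Set.mem_compl_iff, mem_setOf_eq, not_le] at hω
      exact Set.mem_iUnion.mpr ⟨y ω - η, by simp only [mem_setOf_eq]; omega⟩
    have h2 : P {ω | y ω ≤ η - 1}ᶜ ≤ ∑' k : ℕ, P {ω | y ω = k + η} :=
      (measure_mono hsub2).trans (measure_iUnion_le _)
    have hsplit : ∑ n ∈ Finset.range η, P {ω | y ω = n} + ∑' k : ℕ, P {ω | y ω = k + η} = 1 := by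
      rw [Summable.sum_add_tsum_nat_add' (f := fun n => P {ω | y ω = n}) (k := η) ENNReal.summable,
        hs_tsum]
    have hunited : (1:ℝ≥0∞) ≤ P {ω | y ω ≤ η - 1} + P {ω | y ω ≤ η - 1}ᶜ := by
      calc (1:ℝ≥0∞) = P Set.univ := (measure_univ).symm
        _ = P ({ω | y ω ≤ η - 1} ∪ {ω | y ω ≤ η - 1}ᶜ) := by rw [Set.union_compl_self]
        _ ≤ P {ω | y ω ≤ η - 1} + P {ω | y ω ≤ η - 1}ᶜ := measure_union_le _ _
    have hS2 : ∑' k : ℕ, P {ω | y ω = k + η} ≠ ⊤ := by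
      have hle : ∑' k : ℕ, P {ω | y ω = k + η} ≤ 1 := by
        rw [← hsplit]; exact le_add_self
      exact (lt_of_le_of_lt hle ENNReal.one_lt_top).ne
    refine le_antisymm h1 ?_
    have step : ∑ n ∈ Finset.range η, P {ω | y ω = n} + ∑' k : ℕ, P {ω | y ω = k + η}
        ≤ P {ω | y ω ≤ η - 1} + ∑' k : ℕ, P {ω | y ω = k + η} := by
      rw [hsplit]
      exact hunited.trans (add_le_add le_rfl h2)
    exact (WithTop.add_le_add_iff_right hS2).mp step
  -- final computation
  rw [hfinal, ENNReal.toReal_sum (fun n _ => measure_ne_top P _)]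
  have hq : ∀ n : ℕ, (P {ω | y ω = n}).toReal
      = mfun P V 0 1 * bell (fun k => gf A a c u k 1) n / n.factorial := by
    intro n
    rw [hy n, ← hm1 n, hbell n]
  rw [Finset.sum_congr rfl (fun n _ => hq n)]
  have hrange : Finset.range η = insert 0 (Finset.Icc 1 (η-1)) := by
    ext n
    simp only [Finset.mem_range, Finset.mem_insert, Finset.mem_Icc]
    omega
  rw [hrange, Finset.sum_insert (by simp)]
  have h00 : mfun P V 0 1 * bell (fun k => gf A a c u k 1) 0 / (Nat.factorial 0) = mfun P V 0 1 := by
    simp [bell]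
  rw [h00]
  have hm0' : mfun P V 0 1 =
      Real.exp (-(A * ∫ z in Set.Ioi a, (1 - Real.exp (-(N * cir a D μ ts z))) * z ^ 2) - c) := by
    rw [hm0 1 one_pos]
    congr 1
    simp only [one_mul, hudef]
    ring
  rw [hm0', hβ, mul_add, mul_one, Finset.mul_sum]
  congr 1
  apply Finset.sum_congr rfl
  intro n _
  ring
end

section
/- Let a≥0, let h: (a,∞) → [0,∞) be measurable with ∫_a^∞ h(z) z² dz < ∞, and let A, B, N ≥ 0. Define L(ρ) = exp(−ρA − B∫_a^∞(1 − e^{−ρ N h(z)})z² dz) for ρ > 0. Then for every natural number n ≥ 1, L is n-times differentiable at ρ = 1 and L^{(n)}(1) = (−1)^n · B_n(q_1,…,q_n) · L(1), where q_1 = A + B∫_a^∞ N h(z) e^{−N h(z)} z² dz and q_m = B∫_a^∞ (N h(z))^m e^{−N h(z)} z² dz for m ≥ 2. -/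
/-!
Write `L = exp ∘ φ` with `φ(ρ) = -ρA - B Ψ(ρ)` and `Ψ(ρ) = ∫ (1 - e^{-ρ g}) w dμ`, here
`g = N h` and `w = z²` on `(a, ∞)`. Since `c^m e^{-ρc} ≤ m! / ρ^m` for `c ≥ 0`, every
`ρ`-derivative of the integrand is dominated near any `ρ > 0` by a multiple of `g |w|`, so
`Ψ` is smooth on `(0, ∞)` with `Ψ^{(m)} = (-1)^{m+1} ∫ g^m e^{-ρ g} w dμ`; hence
`φ^{(m)}(1) = (-1)^m q_m`. Applying Leibniz' rule to `(e^φ)' = φ' e^φ` reproduces the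
recursion of the Bell polynomials, `(e^φ)^{(n)} = B_n(φ', …, φ^{(n)}) e^φ`, and the
homogeneity `B_n(c x_1, …, c^n x_n) = c^n B_n(x)` collects the signs.
-/

open MeasureTheory Real Set Filter

open scoped ContDiff

@[simp] lemma bell_zero (x : ℕ → ℝ) : bell x 0 = 1 := by rw [bell]

lemma bell_succ (x : ℕ → ℝ) (n : ℕ) :
    bell x (n + 1) =
      ∑ k ∈ Finset.range (n + 1), (n.choose k : ℝ) * bell x (n - k) * x (k + 1) := by
  rw [bell]

lemma bell_congr {x y : ℕ → ℝ} (hxy : ∀ m, 1 ≤ m → x m = y m) (n : ℕ) :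
    bell x n = bell y n := by
  induction n using Nat.strong_induction_on with
  | _ n ih =>
    cases n with
    | zero => simp
    | succ n =>
      rw [bell_succ, bell_succ]
      refine Finset.sum_congr rfl fun k hk => ?_
      rw [ih (n - k) (by grind), hxy (k + 1) (by omega)]

lemma bell_pow_mul (c : ℝ) (x : ℕ → ℝ) (n : ℕ) :
    bell (fun m => c ^ m * x m) n = c ^ n * bell x n := by
  induction n using Nat.strong_induction_on with
  | _ n ih =>
    cases n with
    | zero => simp
    | succ n =>
      rw [bell_succ, bell_succ, Finset.mul_sum]
      refine Finset.sum_congr rfl fun k hk => ?_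
      have hnk : n - k + (k + 1) = n + 1 := by grind
      rw [ih (n - k) (by grind), ← hnk, pow_add]
      ring

section SuccessiveDerivatives

variable {𝕜 F : Type*} [NontriviallyNormedField 𝕜] [NormedAddCommGroup F] [NormedSpace 𝕜 F]
  {f : ℕ → 𝕜 → F} {U : Set 𝕜}

theorem iteratedDeriv_eq_of_hasDerivAt_succ (hU : IsOpen U)
    (hf : ∀ m, ∀ x ∈ U, HasDerivAt (f m) (f (m + 1) x) x) (m : ℕ) {x : 𝕜}
    (hx : x ∈ U) : iteratedDeriv m (f 0) x = f m x := by
  induction m generalizing x with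
  | zero => rfl
  | succ m ih =>
    have hm : iteratedDeriv m (f 0) =ᶠ[nhds x] f m :=
      eventuallyEq_of_mem (hU.mem_nhds hx) fun y hy => ih hy
    rw [iteratedDeriv_succ, hm.deriv_eq, (hf m x hx).deriv]

theorem contDiffOn_of_hasDerivAt_succ (hU : IsOpen U)
    (hf : ∀ m, ∀ x ∈ U, HasDerivAt (f m) (f (m + 1) x) x) : ContDiffOn 𝕜 ∞ (f 0) U := by
  suffices ∀ n : ℕ, ∀ m, ContDiffOn 𝕜 n (f m) U from contDiffOn_infty.2 fun n => this n 0
  intro n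
  induction n with
  | zero =>
    exact fun m => contDiffOn_zero.2 fun x hx => (hf m x hx).continuousAt.continuousWithinAt
  | succ n ih =>
    intro m
    rw [Nat.cast_succ, contDiffOn_succ_iff_deriv_of_isOpen hU]
    refine ⟨fun x hx => (hf m x hx).differentiableAt.differentiableWithinAt, by simp,
      (ih (m + 1)).congr fun x hx => (hf m x hx).deriv⟩

end SuccessiveDerivatives

theorem iteratedDeriv_exp_comp_eq_bell {φ : ℝ → ℝ} {U : Set ℝ} (hU : IsOpen U)
    (hφ : ContDiffOn ℝ ∞ φ U) (n : ℕ) {x : ℝ} (hx : x ∈ U) :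
    iteratedDeriv n (fun y => exp (φ y)) x =
      bell (fun m => iteratedDeriv m φ x) n * exp (φ x) := by
  induction n using Nat.strong_induction_on with
  | _ n ih =>
    cases n with
    | zero => simp
    | succ n =>
      have hexp : deriv (fun y => exp (φ y)) =ᶠ[nhds x] fun y => deriv φ y * exp (φ y) :=
        eventuallyEq_of_mem (hU.mem_nhds hx) fun y hy => by
          rw [deriv_exp ((hφ.differentiableOn (by simp)).differentiableAt (hU.mem_nhds hy)),
            mul_comm]
      have hφ' : ContDiffAt ℝ n (deriv φ) x :=
        ((hφ.deriv_of_isOpen (m := ∞) hU (by simp)).contDiffAt (hU.mem_nhds hx)).of_le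
          (mod_cast le_top)
      have hexpφ : ContDiffAt ℝ n (fun y => exp (φ y)) x :=
        ((hφ.contDiffAt (hU.mem_nhds hx)).exp).of_le (mod_cast le_top)
      rw [iteratedDeriv_succ', hexp.iteratedDeriv_eq, iteratedDeriv_fun_mul hφ' hexpφ, bell_succ,
        Finset.sum_mul]
      refine Finset.sum_congr rfl fun k hk => ?_
      rw [← iteratedDeriv_succ', ih (n - k) (by grind)]
      ring

lemma pow_mul_exp_neg_mul_le (m : ℕ) {r ρ c : ℝ} (hr : 0 < r) (hrρ : r ≤ ρ)
    (hc : 0 ≤ c) : c ^ m * exp (-(ρ * c)) ≤ m.factorial / r ^ m := by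
  have hexp := Real.pow_div_factorial_le_exp (r * c) (mul_nonneg hr.le hc) m
  calc c ^ m * exp (-(ρ * c)) ≤ c ^ m * exp (-(r * c)) := by gcongr
    _ = (r * c) ^ m / m.factorial * exp (-(r * c)) * (m.factorial / r ^ m) := by field_simp; ring
    _ ≤ exp (r * c) * exp (-(r * c)) * (m.factorial / r ^ m) := by gcongr
    _ = m.factorial / r ^ m := by rw [← exp_add]; simp

lemma norm_pow_succ_mul_exp_neg_mul_mul_le (m : ℕ) {r ρ c : ℝ} (hr : 0 < r) (hrρ : r ≤ ρ)
    (hc : 0 ≤ c) (w : ℝ) :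
    ‖c ^ (m + 1) * exp (-(ρ * c)) * w‖ ≤ m.factorial / r ^ m * ‖c * w‖ := by
  rw [norm_mul, norm_mul, norm_mul, Real.norm_of_nonneg (by positivity),
    Real.norm_of_nonneg (by positivity), Real.norm_of_nonneg hc, pow_succ]
  have hpow := pow_mul_exp_neg_mul_le m hr hrρ hc
  calc c ^ m * c * exp (-(ρ * c)) * ‖w‖ = (c ^ m * exp (-(ρ * c))) * (c * ‖w‖) := by ring
    _ ≤ m.factorial / r ^ m * (c * ‖w‖) := by gcongr

lemma norm_one_sub_exp_neg_mul_mul_le {ρ c : ℝ} (hρ : 0 ≤ ρ) (hc : 0 ≤ c) (w : ℝ) :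
    ‖(1 - exp (-(ρ * c))) * w‖ ≤ ρ * ‖c * w‖ := by
  have hρc : 0 ≤ ρ * c := mul_nonneg hρ hc
  have hle : 1 - exp (-(ρ * c)) ≤ ρ * c := by linarith [add_one_le_exp (-(ρ * c))]
  have hnn : 0 ≤ 1 - exp (-(ρ * c)) := by simpa using hρc
  rw [norm_mul, norm_mul, Real.norm_of_nonneg hnn, Real.norm_of_nonneg hc, ← mul_assoc]
  gcongr

lemma hasDerivAt_pow_mul_exp_neg_mul_mul (m : ℕ) (c w ρ : ℝ) :
    HasDerivAt (fun ρ => c ^ m * exp (-(ρ * c)) * w)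
      (-(c ^ (m + 1) * exp (-(ρ * c)) * w)) ρ := by
  have := (((hasDerivAt_mul_const (x := ρ) c).fun_neg.exp).const_mul (c ^ m)).mul_const w
  exact this.congr_deriv (by ring)

lemma hasDerivAt_one_sub_exp_neg_mul_mul (c w ρ : ℝ) :
    HasDerivAt (fun ρ => (1 - exp (-(ρ * c))) * w) (c ^ 1 * exp (-(ρ * c)) * w) ρ := by
  have := ((hasDerivAt_mul_const (x := ρ) c).fun_neg.exp.const_sub 1).mul_const w
  exact this.congr_deriv (by ring)

section Laplace

variable {α : Type*} [MeasurableSpace α]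

noncomputable def laplaceExponent (μ : Measure α) (g w : α → ℝ) (ρ : ℝ) : ℝ :=
  ∫ x, (1 - exp (-(ρ * g x))) * w x ∂μ

noncomputable def laplaceMoment (μ : Measure α) (g w : α → ℝ) (m : ℕ) (ρ : ℝ) : ℝ :=
  ∫ x, g x ^ m * exp (-(ρ * g x)) * w x ∂μ

noncomputable def laplaceExponentDeriv (μ : Measure α) (g w : α → ℝ) : ℕ → ℝ → ℝ
  | 0 => laplaceExponent μ g w
  | m + 1 => fun ρ => (-1) ^ m * laplaceMoment μ g w (m + 1) ρ

variable {μ : Measure α} {g w : α → ℝ} (hg : AEStronglyMeasurable g μ)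
  (hw : AEStronglyMeasurable w μ) (hg₀ : 0 ≤ᵐ[μ] g)
  (hgw : Integrable (fun x => g x * w x) μ)

include hg hw

lemma aestronglyMeasurable_laplaceMoment_integrand (m : ℕ) (ρ : ℝ) :
    AEStronglyMeasurable (fun x => g x ^ m * exp (-(ρ * g x)) * w x) μ := by
  fun_prop

lemma aestronglyMeasurable_laplaceExponent_integrand (ρ : ℝ) :
    AEStronglyMeasurable (fun x => (1 - exp (-(ρ * g x))) * w x) μ := by
  fun_prop

include hg₀ hgw

lemma integrable_laplaceMoment_integrand (m : ℕ) {ρ : ℝ} (hρ : 0 < ρ) :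
    Integrable (fun x => g x ^ (m + 1) * exp (-(ρ * g x)) * w x) μ :=
  (hgw.norm.const_mul _).mono' (aestronglyMeasurable_laplaceMoment_integrand hg hw _ ρ)
    (hg₀.mono fun _ hx => norm_pow_succ_mul_exp_neg_mul_mul_le m hρ le_rfl hx _)

lemma integrable_laplaceExponent_integrand {ρ : ℝ} (hρ : 0 ≤ ρ) :
    Integrable (fun x => (1 - exp (-(ρ * g x))) * w x) μ :=
  (hgw.norm.const_mul ρ).mono' (aestronglyMeasurable_laplaceExponent_integrand hg hw ρ)
    (hg₀.mono fun _ hx => norm_one_sub_exp_neg_mul_mul_le hρ hx _)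

lemma hasDerivAt_laplaceMoment (m : ℕ) {ρ₀ : ℝ} (hρ₀ : 0 < ρ₀) :
    HasDerivAt (laplaceMoment μ g w (m + 1)) (-laplaceMoment μ g w (m + 2) ρ₀) ρ₀ := by
  have hr : 0 < ρ₀ / 2 := half_pos hρ₀
  have hbound : ∀ᵐ x ∂μ, ∀ ρ ∈ Metric.ball ρ₀ (ρ₀ / 2),
      ‖-(g x ^ (m + 2) * exp (-(ρ * g x)) * w x)‖ ≤
        (m + 1).factorial / (ρ₀ / 2) ^ (m + 1) * ‖g x * w x‖ :=
    hg₀.mono fun x hx ρ hρ => by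
      rw [norm_neg]
      refine norm_pow_succ_mul_exp_neg_mul_mul_le (m + 1) hr ?_ hx _
      linarith [(abs_lt.1 (Real.dist_eq ρ ρ₀ ▸ Metric.mem_ball.1 hρ)).1]
  have := hasDerivAt_integral_of_dominated_loc_of_deriv_le (Metric.ball_mem_nhds ρ₀ hr)
    (Eventually.of_forall fun ρ => aestronglyMeasurable_laplaceMoment_integrand hg hw (m + 1) ρ)
    (integrable_laplaceMoment_integrand hg hw hg₀ hgw m hρ₀)
    (aestronglyMeasurable_laplaceMoment_integrand hg hw (m + 2) ρ₀).neg hbound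
    (hgw.norm.const_mul _)
    (ae_of_all _ fun x ρ _ => hasDerivAt_pow_mul_exp_neg_mul_mul (m + 1) (g x) (w x) ρ)
  rw [integral_neg] at this
  exact this.2

lemma hasDerivAt_laplaceExponent {ρ₀ : ℝ} (hρ₀ : 0 < ρ₀) :
    HasDerivAt (laplaceExponent μ g w) (laplaceMoment μ g w 1 ρ₀) ρ₀ := by
  have hr : 0 < ρ₀ / 2 := half_pos hρ₀
  have hbound : ∀ᵐ x ∂μ, ∀ ρ ∈ Metric.ball ρ₀ (ρ₀ / 2),
      ‖g x ^ 1 * exp (-(ρ * g x)) * w x‖ ≤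
        Nat.factorial 0 / (ρ₀ / 2) ^ 0 * ‖g x * w x‖ :=
    hg₀.mono fun x hx ρ hρ => by
      refine norm_pow_succ_mul_exp_neg_mul_mul_le 0 hr ?_ hx _
      linarith [(abs_lt.1 (Real.dist_eq ρ ρ₀ ▸ Metric.mem_ball.1 hρ)).1]
  exact (hasDerivAt_integral_of_dominated_loc_of_deriv_le (Metric.ball_mem_nhds ρ₀ hr)
    (Eventually.of_forall fun ρ => aestronglyMeasurable_laplaceExponent_integrand hg hw ρ)
    (integrable_laplaceExponent_integrand hg hw hg₀ hgw hρ₀.le)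
    (aestronglyMeasurable_laplaceMoment_integrand hg hw 1 ρ₀) hbound
    (hgw.norm.const_mul _)
    (ae_of_all _ fun x ρ _ => hasDerivAt_one_sub_exp_neg_mul_mul (g x) (w x) ρ)).2

lemma hasDerivAt_laplaceExponentDeriv (m : ℕ) {ρ : ℝ} (hρ : 0 < ρ) :
    HasDerivAt (laplaceExponentDeriv μ g w m) (laplaceExponentDeriv μ g w (m + 1) ρ) ρ := by
  cases m with
  | zero => simpa [laplaceExponentDeriv] using hasDerivAt_laplaceExponent hg hw hg₀ hgw hρ
  | succ m =>
    refine ((hasDerivAt_laplaceMoment hg hw hg₀ hgw m hρ).const_mul ((-1) ^ m)).congr_deriv ?_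
    simp only [laplaceExponentDeriv, pow_succ]
    ring

lemma contDiffOn_laplaceExponent : ContDiffOn ℝ ∞ (laplaceExponent μ g w) (Ioi 0) :=
  contDiffOn_of_hasDerivAt_succ isOpen_Ioi fun m _ hρ =>
    hasDerivAt_laplaceExponentDeriv hg hw hg₀ hgw m hρ

lemma iteratedDeriv_succ_laplaceExponent (m : ℕ) {ρ : ℝ} (hρ : 0 < ρ) :
    iteratedDeriv (m + 1) (laplaceExponent μ g w) ρ =
      (-1) ^ m * laplaceMoment μ g w (m + 1) ρ :=
  iteratedDeriv_eq_of_hasDerivAt_succ isOpen_Ioi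
    (fun m _ hρ => hasDerivAt_laplaceExponentDeriv hg hw hg₀ hgw m hρ) (m + 1) hρ

lemma iteratedDeriv_succ_drift_sub_laplaceExponent (A B : ℝ) (k : ℕ) {ρ : ℝ}
    (hρ : 0 < ρ) :
    iteratedDeriv (k + 1) (fun ρ => -(ρ * A) - B * laplaceExponent μ g w ρ) ρ =
      (-1) ^ (k + 1) * ((if k = 0 then A else 0) + B * laplaceMoment μ g w (k + 1) ρ) := by
  have hBΦ : ContDiffAt ℝ (k + 1) (fun ρ => B * laplaceExponent μ g w ρ) ρ :=
    (contDiffAt_const.mul ((contDiffOn_laplaceExponent hg hw hg₀ hgw).contDiffAt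
      (Ioi_mem_nhds hρ))).of_le (mod_cast le_top)
  rw [iteratedDeriv_fun_sub (by fun_prop) hBΦ, iteratedDeriv_const_mul_field,
    iteratedDeriv_succ_laplaceExponent hg hw hg₀ hgw k hρ]
  simp only [iteratedDeriv_fun_neg, iteratedDeriv_mul_const_field, iteratedDeriv_fun_id]
  split_ifs <;> simp_all <;> ring

end Laplace

theorem laplace_total_iteratedDeriv_bell_general
    (a : ℝ) (h : ℝ → ℝ) (hmeas : Measurable h)
    (hnn : ∀ z ∈ Set.Ioi a, 0 ≤ h z)
    (hint : IntegrableOn (fun z => h z * z ^ 2) (Set.Ioi a))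
    (A B N : ℝ) (hN : 0 ≤ N)
    (n : ℕ)
    (L : ℝ → ℝ)
    (hL : ∀ ρ : ℝ, L ρ =
      Real.exp (-(ρ * A) - B * ∫ z in Set.Ioi a, (1 - Real.exp (-(ρ * N * h z))) * z ^ 2))
    (q : ℕ → ℝ)
    (hq1 : q 1 = A + B * ∫ z in Set.Ioi a, N * h z * Real.exp (-(N * h z)) * z ^ 2)
    (hq : ∀ m : ℕ, 2 ≤ m →
      q m = B * ∫ z in Set.Ioi a, (N * h z) ^ m * Real.exp (-(N * h z)) * z ^ 2) :
    ContDiffAt ℝ n L 1 ∧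
    iteratedDeriv n L 1 = (-1) ^ n * bell q n * L 1 := by
  set μ := volume.restrict (Ioi a)
  set g : ℝ → ℝ := fun z => N * h z
  set w : ℝ → ℝ := fun z => z ^ 2
  have hg : AEStronglyMeasurable g μ := by fun_prop
  have hw : AEStronglyMeasurable w μ := by fun_prop
  have hg₀ : 0 ≤ᵐ[μ] g :=
    (ae_restrict_iff' measurableSet_Ioi).2 (ae_of_all _ fun z hz => mul_nonneg hN (hnn z hz))
  have hgw : Integrable (fun z => g z * w z) μ := by
    simpa only [g, w, mul_assoc] using hint.const_mul N
  set φ : ℝ → ℝ := fun ρ => -(ρ * A) - B * laplaceExponent μ g w ρ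
  have hLφ : L = fun ρ => exp (φ ρ) :=
    funext fun ρ => by simp only [hL, φ, laplaceExponent, g, w, mul_assoc]
  have hφ : ContDiffOn ℝ ∞ φ (Ioi 0) :=
    (contDiff_id.mul contDiff_const).neg.contDiffOn.sub
      (contDiffOn_const.mul (contDiffOn_laplaceExponent hg hw hg₀ hgw))
  have hφ_deriv : ∀ m, 1 ≤ m → iteratedDeriv m φ 1 = (-1) ^ m * q m := by
    rintro (_ | k) hm
    · omega
    rw [iteratedDeriv_succ_drift_sub_laplaceExponent hg hw hg₀ hgw A B k one_pos]
    rcases k with _ | k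
    · simp [hq1, laplaceMoment, g, w]
    · simp [hq (k + 2) (by omega), laplaceMoment, g, w]
  rw [hLφ]
  refine ⟨((hφ.contDiffAt (Ioi_mem_nhds one_pos)).exp).of_le (mod_cast le_top), ?_⟩
  rw [iteratedDeriv_exp_comp_eq_bell isOpen_Ioi hφ n (mem_Ioi.2 one_pos), bell_congr hφ_deriv,
    bell_pow_mul]

/-- Bell-polynomial evaluation of the `n`-th derivative at `ρ = 1` of
`L(ρ) = exp(−ρA − B∫_a^∞(1−e^{−ρNh(z)})z²dz)` (eq. (33) of the paper). -/
theorem laplace_total_iteratedDeriv_bell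
    (a : ℝ) (ha : 0 ≤ a) (h : ℝ → ℝ) (hmeas : Measurable h)
    (hnn : ∀ z ∈ Set.Ioi a, 0 ≤ h z)
    (hint : IntegrableOn (fun z => h z * z ^ 2) (Set.Ioi a))
    (A B N : ℝ) (hA : 0 ≤ A) (hB : 0 ≤ B) (hN : 0 ≤ N)
    (n : ℕ) (hn : 1 ≤ n)
    (L : ℝ → ℝ)
    (hL : ∀ ρ : ℝ, L ρ =
      Real.exp (-(ρ * A) - B * ∫ z in Set.Ioi a, (1 - Real.exp (-(ρ * N * h z))) * z ^ 2))
    (q : ℕ → ℝ)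
    (hq1 : q 1 = A + B * ∫ z in Set.Ioi a, N * h z * Real.exp (-(N * h z)) * z ^ 2)
    (hq : ∀ m : ℕ, 2 ≤ m →
      q m = B * ∫ z in Set.Ioi a, (N * h z) ^ m * Real.exp (-(N * h z)) * z ^ 2) :
    ContDiffAt ℝ n L 1 ∧
    iteratedDeriv n L 1 = (-1) ^ n * bell q n * L 1 :=
  laplace_total_iteratedDeriv_bell_general a h hmeas hnn hint A B N hN n L hL q hq1 hq
end

section
/- Let a>0, D>0, μ≥0, t>0 and r>a. Then ∫_0^t κ(τ,r) e^{−μτ} dτ = (a/(2r))·[ exp(−√(μ/D)(r−a))·erfc((r−a)/√(4Dt) − √(μt)) + exp(√(μ/D)(r−a))·erfc((r−a)/√(4Dt) + √(μt)) ]. -/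
/-!
With `c = (r - a) / (2√D)` and `m = √μ`, the integrand is `(a / r)` times the first-passage density
`c / √(π τ³) · exp (-c² / τ - m² τ)` of a Brownian motion with drift, and the right-hand side is
`(a / r)` times `G t = (e^{-2cm} erfc (c/√t - m√t) + e^{2cm} erfc (c/√t + m√t)) / 2`.
Differentiating `G` gives back the density, because `e^{∓2cm} e^{-(c/√t ∓ m√t)²} = e^{-c²/t - m²t}`,
and `G t → 0` as `t → 0⁺` since both arguments of `erfc` tend to `+∞`. The fundamental theorem of
calculus on `(0, t]` concludes; integrability comes for free from the positivity of the density.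
-/

open MeasureTheory Real Set Filter Topology

noncomputable def erfc (x : ℝ) : ℝ :=
  (2 / Real.sqrt Real.pi) * ∫ u in Set.Ioi x, Real.exp (-u ^ 2)

section TailIntegral

variable {E : Type*} [NormedAddCommGroup E] [NormedSpace ℝ E] {f : ℝ → E}

theorem hasDerivAt_integral_Ioi [CompleteSpace E] (hf : Integrable f) {x : ℝ}
    (hx : ContinuousAt f x) :
    HasDerivAt (fun y ↦ ∫ u in Ioi y, f u) (-f x) x := by
  have htail : (fun y ↦ ∫ u in Ioi y, f u) = fun y ↦ (∫ u in Ioi 0, f u) - ∫ u in 0..y, f u := by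
    ext y
    rw [← intervalIntegral.integral_Ioi_sub_Ioi' hf.integrableOn hf.integrableOn, sub_sub_cancel]
  rw [htail]
  exact (intervalIntegral.integral_hasDerivAt_right hf.intervalIntegrable
    hf.aestronglyMeasurable.stronglyMeasurableAtFilter hx).const_sub _

theorem tendsto_integral_Ioi_atTop (hf : Integrable f) :
    Tendsto (fun y ↦ ∫ u in Ioi y, f u) atTop (𝓝 0) := by
  have hempty : ⋂ y : ℝ, Ioi y = ∅ := eq_empty_of_forall_notMem fun x hx ↦
    lt_irrefl x (mem_iInter.1 hx x)
  simpa [hempty] using tendsto_setIntegral_of_antitone (fun _ ↦ measurableSet_Ioi)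
    (fun _ _ h ↦ Ioi_subset_Ioi h) ⟨0, hf.integrableOn⟩

end TailIntegral

theorem integrable_exp_neg_sq : Integrable fun u : ℝ ↦ exp (-u ^ 2) := by
  simpa using integrable_exp_neg_mul_sq one_pos

theorem hasDerivAt_erfc (x : ℝ) : HasDerivAt erfc (-(2 / √π * exp (-x ^ 2))) x := by
  have := (hasDerivAt_integral_Ioi integrable_exp_neg_sq (by fun_prop : ContinuousAt _ x)).const_mul
    (2 / √π)
  rwa [mul_neg] at this

theorem tendsto_erfc_atTop : Tendsto erfc atTop (𝓝 0) := by
  have h := (tendsto_integral_Ioi_atTop integrable_exp_neg_sq).const_mul (2 / √π)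
  rwa [mul_zero] at h

theorem integral_Ioc_eq_sub_of_hasDerivAt_of_tendsto_of_nonneg {f f' : ℝ → ℝ} {a b fa : ℝ}
    (hab : a < b) (hderiv : ∀ x ∈ Ioc a b, HasDerivAt f (f' x) x)
    (hpos : ∀ x ∈ Ioo a b, 0 ≤ f' x) (ha : Tendsto f (𝓝[>] a) (𝓝 fa)) :
    ∫ x in Ioc a b, f' x = f b - fa := by
  classical
  set F := Function.update f a fa
  have hFf : EqOn F f (Ioc a b) := fun x hx ↦ Function.update_of_ne hx.1.ne' _ _
  have hF : ∀ x ∈ Ioo a b, HasDerivAt F (f' x) x := fun x hx ↦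
    (hderiv x (Ioo_subset_Ioc_self hx)).congr_of_eventuallyEq <|
      eventually_of_mem (Ioo_mem_nhds hx.1 hx.2) fun y hy ↦ hFf (Ioo_subset_Ioc_self hy)
  have hcont : ContinuousOn F (Icc a b) := by
    rw [continuousOn_update_iff, Icc_sdiff_left]
    refine ⟨fun x hx ↦ (hderiv x hx).continuousAt.continuousWithinAt, fun _ ↦ ?_⟩
    exact ha.mono_left (nhdsWithin_mono _ Ioc_subset_Ioi_self)
  have hint := intervalIntegral.integrableOn_deriv_of_nonneg hcont hF hpos
  rw [← intervalIntegral.integral_of_le hab.le,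
    intervalIntegral.integral_eq_sub_of_hasDerivAt_of_le hab.le hcont hF
      ((intervalIntegrable_iff_integrableOn_Ioc_of_le hab.le).2 hint),
    hFf ⟨hab, le_rfl⟩]
  simp [F]

noncomputable def firstPassageDensity (c m τ : ℝ) : ℝ :=
  c / (√π * √(τ ^ 3)) * exp (-(c ^ 2 / τ) - m ^ 2 * τ)

noncomputable def firstPassageCDF (c m t : ℝ) : ℝ :=
  (exp (-(2 * c * m)) * erfc (c / √t - m * √t) + exp (2 * c * m) * erfc (c / √t + m * √t)) / 2

theorem firstPassageDensity_nonneg {c : ℝ} (hc : 0 ≤ c) (m τ : ℝ) :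
    0 ≤ firstPassageDensity c m τ := by
  unfold firstPassageDensity; positivity

theorem exp_neg_mul_exp_neg_sq_div_sub (c m : ℝ) {s : ℝ} (hs : s ≠ 0) :
    exp (-(2 * c * m)) * exp (-(c / s - m * s) ^ 2) = exp (-(c ^ 2 / s ^ 2) - m ^ 2 * s ^ 2) := by
  rw [← exp_add]; congr 1; field_simp; ring

theorem hasDerivAt_firstPassageCDF (c m : ℝ) {t : ℝ} (ht : 0 < t) :
    HasDerivAt (firstPassageCDF c m) (firstPassageDensity c m t) t := by
  have hs : 0 < √t := sqrt_pos.2 ht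
  have hsq : √t ^ 2 = t := sq_sqrt ht.le
  have hsqrt : HasDerivAt (√·) (1 / (2 * √t)) t := hasDerivAt_sqrt ht.ne'
  have hpole := (hasDerivAt_const t c).div hsqrt hs.ne'
  have hminus := (hasDerivAt_erfc _).comp t (hpole.sub (hsqrt.const_mul m))
  have hplus := (hasDerivAt_erfc _).comp t (hpole.add (hsqrt.const_mul m))
  refine (((hminus.const_mul (exp (-(2 * c * m)))).add
    (hplus.const_mul (exp (2 * c * m)))).div_const 2).congr_deriv ?_
  have hexp_minus := exp_neg_mul_exp_neg_sq_div_sub c m hs.ne'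
  have hexp_plus := exp_neg_mul_exp_neg_sq_div_sub c (-m) hs.ne'
  simp only [mul_neg, neg_mul, neg_neg, sub_neg_eq_add, even_two, Even.neg_pow, hsq]
    at hexp_minus hexp_plus
  have h3 : √(t ^ 3) = t * √t := by
    rw [show t ^ 3 = t ^ 2 * t by ring, sqrt_mul (sq_nonneg t), sqrt_sq ht.le]
  simp only [Pi.sub_apply, Pi.add_apply, Pi.div_apply, hsq, zero_mul, zero_sub]
  rw [firstPassageDensity, h3]
  linear_combination (-(1 / √π) * (-(c * (1 / (2 * √t))) / t - m * (1 / (2 * √t)))) * hexp_minus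
    + (-(1 / √π) * (-(c * (1 / (2 * √t))) / t + m * (1 / (2 * √t)))) * hexp_plus

theorem tendsto_firstPassageCDF_nhdsGT_zero {c : ℝ} (hc : 0 < c) (m : ℝ) :
    Tendsto (firstPassageCDF c m) (𝓝[>] 0) (𝓝 0) := by
  have hsqrt : Tendsto (√·) (𝓝[>] 0) (𝓝[>] 0) :=
    tendsto_nhdsWithin_of_tendsto_nhds_of_eventually_within _
      (by simpa using continuous_sqrt.tendsto' 0 0 sqrt_zero |>.mono_left nhdsWithin_le_nhds)
      (eventually_nhdsWithin_of_forall fun _ hu ↦ sqrt_pos.2 hu)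
  have hpole : Tendsto (fun u ↦ c / √u) (𝓝[>] 0) atTop :=
    (tendsto_inv_nhdsGT_zero.comp hsqrt).const_mul_atTop hc
  have hdrift : Tendsto (fun u ↦ m * √u) (𝓝[>] 0) (𝓝 0) := by
    simpa using (hsqrt.mono_right nhdsWithin_le_nhds).const_mul m
  have hminus := tendsto_erfc_atTop.comp (hpole.atTop_add hdrift.neg)
  have hplus := tendsto_erfc_atTop.comp (hpole.atTop_add hdrift)
  unfold firstPassageCDF
  simpa [sub_eq_add_neg] using
    ((hminus.const_mul (exp (-(2 * c * m)))).add (hplus.const_mul (exp (2 * c * m)))).div_const 2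

theorem kappa_mul_exp_neg_eq (a r τ : ℝ) {D μ : ℝ} (hD : 0 < D) (hμ : 0 ≤ μ) :
    kappa a D τ r * exp (-(μ * τ)) =
      a / r * firstPassageDensity ((r - a) / (2 * √D)) (√μ) τ := by
  have hsqrt : √(4 * π * D * τ ^ 3) = 2 * √D * (√π * √(τ ^ 3)) := by
    rw [sqrt_mul (by positivity), sqrt_mul' _ hD.le, sqrt_mul' _ pi_pos.le,
      show (4 : ℝ) = 2 ^ 2 by norm_num, sqrt_sq zero_le_two]
    ring
  have hexp : -(r - a) ^ 2 / (4 * D * τ) + -(μ * τ) =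
      -(((r - a) / (2 * √D)) ^ 2 / τ) - √μ ^ 2 * τ := by
    rw [div_pow, mul_pow, sq_sqrt hD.le, sq_sqrt hμ]
    ring
  rw [kappa, firstPassageDensity, hsqrt, mul_assoc, ← exp_add, hexp]
  ring

theorem firstPassageCDF_eq (a r t : ℝ) {D μ : ℝ} (hD : 0 < D) (hμ : 0 ≤ μ) :
    firstPassageCDF ((r - a) / (2 * √D)) (√μ) t =
      (exp (-(√(μ / D) * (r - a))) * erfc ((r - a) / √(4 * D * t) - √(μ * t)) +
        exp (√(μ / D) * (r - a)) * erfc ((r - a) / √(4 * D * t) + √(μ * t))) / 2 := by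
  have hsD : √D ≠ 0 := (sqrt_pos.2 hD).ne'
  have hdrift : 2 * ((r - a) / (2 * √D)) * √μ = √(μ / D) * (r - a) := by
    rw [sqrt_div' _ hD.le]
    field_simp
  have hpole : (r - a) / (2 * √D) / √t = (r - a) / √(4 * D * t) := by
    rw [sqrt_mul (by positivity), sqrt_mul zero_le_four, show (4 : ℝ) = 2 ^ 2 by norm_num,
      sqrt_sq zero_le_two]
    ring
  rw [firstPassageCDF, hdrift, hpole, sqrt_mul hμ]

theorem integral_firstPassageDensity {c : ℝ} (hc : 0 < c) (m : ℝ) {t : ℝ} (ht : 0 < t) :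
    ∫ τ in Ioc 0 t, firstPassageDensity c m τ = firstPassageCDF c m t := by
  simpa using integral_Ioc_eq_sub_of_hasDerivAt_of_tendsto_of_nonneg ht
    (fun τ hτ ↦ hasDerivAt_firstPassageCDF c m hτ.1)
    (fun τ _ ↦ firstPassageDensity_nonneg hc.le m τ) (tendsto_firstPassageCDF_nhdsGT_zero hc m)

theorem cir_closed_form_general (a D μ t r : ℝ)
    (hD : 0 < D) (hμ : 0 ≤ μ) (ht : 0 < t) (hr : a < r) :
    ∫ τ in Set.Ioc (0 : ℝ) t, kappa a D τ r * Real.exp (-(μ * τ)) =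
      (a / (2 * r)) *
        (Real.exp (-(Real.sqrt (μ / D) * (r - a))) *
            erfc ((r - a) / Real.sqrt (4 * D * t) - Real.sqrt (μ * t)) +
          Real.exp (Real.sqrt (μ / D) * (r - a)) *
            erfc ((r - a) / Real.sqrt (4 * D * t) + Real.sqrt (μ * t))) := by
  have hc : 0 < (r - a) / (2 * √D) := div_pos (sub_pos.2 hr) (by positivity)
  simp_rw [kappa_mul_exp_neg_eq a r _ hD hμ]
  rw [integral_const_mul, integral_firstPassageDensity hc _ ht, firstPassageCDF_eq a r t hD hμ]
  ring

/-- Closed form of the channel impulse response with degradation (eq. (7) of the paper). -/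
theorem cir_closed_form (a D μ t r : ℝ)
    (ha : 0 < a) (hD : 0 < D) (hμ : 0 ≤ μ) (ht : 0 < t) (hr : a < r) :
    ∫ τ in Set.Ioc (0 : ℝ) t, kappa a D τ r * Real.exp (-(μ * τ)) =
      (a / (2 * r)) *
        (Real.exp (-(Real.sqrt (μ / D) * (r - a))) *
            erfc ((r - a) / Real.sqrt (4 * D * t) - Real.sqrt (μ * t)) +
          Real.exp (Real.sqrt (μ / D) * (r - a)) *
            erfc ((r - a) / Real.sqrt (4 * D * t) + Real.sqrt (μ * t))) :=
  cir_closed_form_general a D μ t r hD hμ ht hr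
end

section
/- Let a>0, D>0, μ>0 and r>a. Then ∫_0^∞ κ(τ,r) e^{−μτ} dτ = (a/r)·exp(−√(μ/D)(r−a)). Equivalently, the channel impulse response h_t(r) = ∫_0^t κ(τ,r)e^{−μτ}dτ tends to (a/r)·exp(−√(μ/D)(r−a)) as t → ∞. -/
/-!
Up to the factor `a / r`, `κ(τ, r)` is the Lévy (first-passage) density with scale
`b = (r - a) / √D`, so the claim is the Laplace transform `e^{-b√μ}` of that density.
Its primitive is explicit in terms of `P(x) = ∫₀ˣ e^{-t²} dt`: with
`S±(τ) = b / (2√τ) ± √μ √τ` one has `S±² = b² / (4τ) ± b√μ + μτ`, so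
`e^{±b√μ} e^{-S±²}` are both equal to `e^{-b²/(4τ) - μτ}`, and
`-(e^{-b√μ} P(S₋) + e^{b√μ} P(S₊)) / √π` differentiates to the integrand. Evaluating it at
`τ → 0⁺` (both `S± → ∞`) and `τ → ∞` (`S₋ → -∞`, `S₊ → ∞`) gives the value.
-/

open MeasureTheory Real Set Filter

open Topology

theorem integrableOn_and_integral_Ioi_of_hasDerivAt_of_nonneg_of_tendsto {g g' : ℝ → ℝ}
    {a l₀ l : ℝ} (hderiv : ∀ x ∈ Ioi a, HasDerivAt g (g' x) x) (hg' : ∀ x ∈ Ioi a, 0 ≤ g' x)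
    (hl₀ : Tendsto g (𝓝[>] a) (𝓝 l₀)) (hl : Tendsto g atTop (𝓝 l)) :
    IntegrableOn g' (Ioi a) ∧ ∫ x in Ioi a, g' x = l - l₀ := by
  classical
  let g₀ := Function.update g a l₀
  have hcont : ContinuousWithinAt g₀ (Ici a) a := by
    rw [continuousWithinAt_update_same, ← Ioi_insert, insert_sdiff_self_of_notMem self_notMem_Ioi]
    exact hl₀
  have hderiv₀ (x : ℝ) (hx : x ∈ Ioi a) : HasDerivAt g₀ (g' x) x :=
    (hderiv x hx).congr_of_eventuallyEq <| by
      filter_upwards [Ioi_mem_nhds hx] with y hy using Function.update_of_ne hy.ne' _ _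
  have hl₀' : Tendsto g₀ atTop (𝓝 l) := hl.congr' <| by
    filter_upwards [Ioi_mem_atTop a] with y hy using (Function.update_of_ne hy.ne' _ _).symm
  refine ⟨integrableOn_Ioi_deriv_of_nonneg hcont hderiv₀ hg' hl₀', ?_⟩
  rw [integral_Ioi_of_hasDerivAt_of_nonneg hcont hderiv₀ hg' hl₀']
  simp only [g₀, Function.update_self]

noncomputable def gaussPrimitive (x : ℝ) : ℝ := ∫ t in (0 : ℝ)..x, exp (-t ^ 2)

theorem hasDerivAt_gaussPrimitive (x : ℝ) : HasDerivAt gaussPrimitive (exp (-x ^ 2)) x :=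
  ((by fun_prop : Continuous fun t : ℝ => exp (-t ^ 2)).integral_hasStrictDerivAt 0 x).hasDerivAt

theorem gaussPrimitive_neg (x : ℝ) : gaussPrimitive (-x) = -gaussPrimitive x := by
  have h := intervalIntegral.integral_comp_neg (a := 0) (b := x) fun t => exp (-t ^ 2)
  simp only [neg_sq, neg_zero] at h
  rw [gaussPrimitive, gaussPrimitive, intervalIntegral.integral_symm (-x) 0, ← h]

theorem tendsto_gaussPrimitive_atTop : Tendsto gaussPrimitive atTop (𝓝 (√π / 2)) := by
  have h := intervalIntegral_tendsto_integral_Ioi 0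
    (by simpa using (integrable_exp_neg_mul_sq one_pos).integrableOn) tendsto_id
  rwa [show ∫ t in Ioi (0 : ℝ), exp (-t ^ 2) = √π / 2 by simpa using integral_gaussian_Ioi 1]
    at h

theorem tendsto_gaussPrimitive_atBot : Tendsto gaussPrimitive atBot (𝓝 (-(√π / 2))) := by
  have h := (tendsto_gaussPrimitive_atTop.comp tendsto_neg_atBot_atTop).neg
  simpa only [Function.comp_def, gaussPrimitive_neg, neg_neg] using h

noncomputable def levyDensity (b τ : ℝ) : ℝ := b / √(4 * π * τ ^ 3) * exp (-b ^ 2 / (4 * τ))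

theorem levyDensity_nonneg {b : ℝ} (hb : 0 ≤ b) (τ : ℝ) : 0 ≤ levyDensity b τ := by
  unfold levyDensity; positivity

theorem kappa_eq_levyDensity {a D r : ℝ} (hD : 0 < D) (τ : ℝ) :
    kappa a D τ r = a / r * levyDensity ((r - a) / √D) τ := by
  have hsqrt : √(4 * π * D * τ ^ 3) = √D * √(4 * π * τ ^ 3) := by
    rw [← sqrt_mul hD.le]; ring_nf
  have hexp : -(r - a) ^ 2 / (4 * D * τ) = -((r - a) / √D) ^ 2 / (4 * τ) := by
    rw [div_pow, sq_sqrt hD.le]; ring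
  rw [kappa, levyDensity, hsqrt, hexp, div_div, mul_assoc]

theorem tendsto_div_sqrt_atTop (b : ℝ) : Tendsto (fun τ => b / (2 * √τ)) atTop (𝓝 0) := by
  simpa using ((tendsto_inv_atTop_zero.comp tendsto_sqrt_atTop).const_mul (b / 2)).congr
    fun τ => by simp only [Function.comp_apply]; ring

noncomputable def levyShift (b β τ : ℝ) : ℝ := b / (2 * √τ) + β * √τ

section levyShift

variable {b β τ : ℝ}

theorem levyShift_sq (hτ : 0 < τ) : levyShift b β τ ^ 2 = b ^ 2 / (4 * τ) + b * β + β ^ 2 * τ := by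
  obtain ⟨s, hs, rfl⟩ : ∃ s, 0 < s ∧ τ = s ^ 2 := ⟨√τ, sqrt_pos.2 hτ, (sq_sqrt hτ.le).symm⟩
  rw [levyShift, sqrt_sq hs.le]
  field_simp
  ring

theorem hasDerivAt_levyShift (hτ : 0 < τ) :
    HasDerivAt (levyShift b β) (-(b / (4 * τ * √τ)) + β / (2 * √τ)) τ := by
  have hs : 0 < √τ := sqrt_pos.2 hτ
  have hsqrt := hasDerivAt_sqrt hτ.ne'
  refine ((((hsqrt.const_mul 2).inv (by positivity)).const_mul b).add
    (hsqrt.const_mul β)).congr_deriv ?_ |>.congr_of_eventuallyEq ?_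
  · obtain ⟨s, hs', rfl⟩ : ∃ s, 0 < s ∧ τ = s ^ 2 := ⟨√τ, hs, (sq_sqrt hτ.le).symm⟩
    rw [sqrt_sq hs'.le]
    field_simp
    ring
  · exact .of_forall fun x => by simp only [levyShift, Pi.add_apply, Pi.inv_apply, div_eq_mul_inv]

theorem tendsto_levyShift_nhdsGT_zero (hb : 0 < b) : Tendsto (levyShift b β) (𝓝[>] 0) atTop := by
  have hpole : Tendsto (fun τ => b / 2 * √τ⁻¹) (𝓝[>] 0) atTop :=
    (tendsto_sqrt_atTop.comp tendsto_inv_nhdsGT_zero).const_mul_atTop (by positivity)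
  have hzero : Tendsto (fun τ => β * √τ) (𝓝[>] 0) (𝓝 0) := by
    simpa using ((continuous_sqrt.tendsto 0).const_mul β).mono_left nhdsWithin_le_nhds
  refine (hpole.atTop_add hzero).congr fun τ => ?_
  rw [levyShift, sqrt_inv]
  ring

theorem tendsto_levyShift_atTop (hβ : 0 < β) : Tendsto (levyShift b β) atTop atTop :=
  (tendsto_div_sqrt_atTop b).add_atTop (tendsto_sqrt_atTop.const_mul_atTop hβ)

theorem tendsto_levyShift_atBot (hβ : β < 0) : Tendsto (levyShift b β) atTop atBot :=
  (tendsto_div_sqrt_atTop b).add_atBot (tendsto_sqrt_atTop.const_mul_atTop_of_neg hβ)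

end levyShift

noncomputable def levyLaplacePrimitive (b β τ : ℝ) : ℝ :=
  -(exp (-(b * β)) * gaussPrimitive (levyShift b (-β) τ) +
    exp (b * β) * gaussPrimitive (levyShift b β τ)) / √π

section levyLaplacePrimitive

variable {b β τ : ℝ}

theorem hasDerivAt_levyLaplacePrimitive (hτ : 0 < τ) :
    HasDerivAt (levyLaplacePrimitive b β) (levyDensity b τ * exp (-(β ^ 2 * τ))) τ := by
  have hderiv (β' : ℝ) :=
    (hasDerivAt_gaussPrimitive _).comp τ (hasDerivAt_levyShift (b := b) (β := β') hτ)
  refine ((((hderiv (-β)).const_mul (exp (-(b * β)))).add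
    ((hderiv β).const_mul (exp (b * β)))).neg.div_const √π).congr_deriv ?_
  have hgauss (β' : ℝ) :
      exp (b * β') * exp (-levyShift b β' τ ^ 2) =
        exp (-b ^ 2 / (4 * τ)) * exp (-(β' ^ 2 * τ)) := by
    rw [← exp_add, ← exp_add, levyShift_sq hτ]
    ring_nf
  have h4pi : √(4 * π * τ ^ 3) = 2 * √π * τ * √τ := by
    rw [show 4 * π * τ ^ 3 = (2 * τ) ^ 2 * (π * τ) by ring, sqrt_mul' _ (by positivity),
      sqrt_mul pi_pos.le, sqrt_sq (by positivity)]
    ring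
  have hgauss_neg := hgauss (-β)
  rw [mul_neg, neg_sq] at hgauss_neg
  simp only [← mul_assoc, hgauss_neg, hgauss]
  rw [levyDensity, h4pi]
  field_simp
  ring

theorem tendsto_levyLaplacePrimitive_nhdsGT_zero (hb : 0 < b) :
    Tendsto (levyLaplacePrimitive b β) (𝓝[>] 0) (𝓝 (-(exp (-(b * β)) + exp (b * β)) / 2)) := by
  have hS (β' : ℝ) :=
    tendsto_gaussPrimitive_atTop.comp (tendsto_levyShift_nhdsGT_zero (β := β') hb)
  have h : Tendsto (levyLaplacePrimitive b β) (𝓝[>] 0)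
      (𝓝 (-(exp (-(b * β)) * (√π / 2) + exp (b * β) * (√π / 2)) / √π)) :=
    (((hS (-β)).const_mul _).add ((hS β).const_mul _)).neg.div_const √π
  convert h using 2
  field_simp

theorem tendsto_levyLaplacePrimitive_atTop (hβ : 0 < β) :
    Tendsto (levyLaplacePrimitive b β) atTop (𝓝 ((exp (-(b * β)) - exp (b * β)) / 2)) := by
  have hneg :=
    tendsto_gaussPrimitive_atBot.comp (tendsto_levyShift_atBot (b := b) (neg_neg_of_pos hβ))
  have hpos := tendsto_gaussPrimitive_atTop.comp (tendsto_levyShift_atTop (b := b) hβ)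
  have h : Tendsto (levyLaplacePrimitive b β) atTop
      (𝓝 (-(exp (-(b * β)) * -(√π / 2) + exp (b * β) * (√π / 2)) / √π)) :=
    ((hneg.const_mul _).add (hpos.const_mul _)).neg.div_const √π
  convert h using 2
  field_simp
  ring

end levyLaplacePrimitive

theorem integrableOn_and_integral_levyDensity_mul_exp {b m : ℝ} (hb : 0 < b) (hm : 0 < m) :
    IntegrableOn (fun τ => levyDensity b τ * exp (-(m * τ))) (Ioi 0) ∧
      ∫ τ in Ioi 0, levyDensity b τ * exp (-(m * τ)) = exp (-(b * √m)) := by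
  have hderiv (τ : ℝ) (hτ : τ ∈ Ioi 0) :
      HasDerivAt (levyLaplacePrimitive b √m) (levyDensity b τ * exp (-(m * τ))) τ := by
    simpa only [sq_sqrt hm.le] using hasDerivAt_levyLaplacePrimitive (β := √m) hτ
  have hnonneg (τ : ℝ) (_ : τ ∈ Ioi 0) : 0 ≤ levyDensity b τ * exp (-(m * τ)) :=
    mul_nonneg (levyDensity_nonneg hb.le τ) (exp_pos _).le
  obtain ⟨hint, hval⟩ := integrableOn_and_integral_Ioi_of_hasDerivAt_of_nonneg_of_tendsto hderiv
    hnonneg (tendsto_levyLaplacePrimitive_nhdsGT_zero hb)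
    (tendsto_levyLaplacePrimitive_atTop (sqrt_pos.2 hm))
  exact ⟨hint, hval.trans (by ring)⟩

theorem cir_infinite_horizon_general (a D μ r : ℝ)
    (hD : 0 < D) (hμ : 0 < μ) (hr : a < r) :
    (∫ τ in Set.Ioi (0 : ℝ), kappa a D τ r * Real.exp (-(μ * τ)) =
      (a / r) * Real.exp (-(Real.sqrt (μ / D) * (r - a)))) ∧
    Filter.Tendsto (fun t => cir a D μ t r) Filter.atTop
      (nhds ((a / r) * Real.exp (-(Real.sqrt (μ / D) * (r - a))))) := by
  set b := (r - a) / √D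
  have hintegrand : (fun τ => kappa a D τ r * exp (-(μ * τ))) =
      fun τ => a / r * (levyDensity b τ * exp (-(μ * τ))) := by
    funext τ
    rw [kappa_eq_levyDensity hD, mul_assoc]
  have hexponent : √(μ / D) * (r - a) = b * √μ := by
    rw [sqrt_div' μ hD.le]
    ring
  obtain ⟨hint, hval⟩ :=
    integrableOn_and_integral_levyDensity_mul_exp (div_pos (sub_pos.2 hr) (sqrt_pos.2 hD)) hμ
  have hintegral : ∫ τ in Ioi 0, kappa a D τ r * exp (-(μ * τ)) =
      a / r * exp (-(√(μ / D) * (r - a))) := by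
    rw [hintegrand, integral_const_mul, hval, hexponent]
  refine ⟨hintegral, hintegral ▸ ?_⟩
  refine (intervalIntegral_tendsto_integral_Ioi 0
    (hintegrand ▸ hint.const_mul (a / r)) tendsto_id).congr' ?_
  filter_upwards [eventually_ge_atTop 0] with t ht
  rw [id, intervalIntegral.integral_of_le ht, cir]

/-- Infinite-horizon channel impulse response:
`∫_0^∞ κ(τ,r)e^{−μτ}dτ = (a/r)·e^{−√(μ/D)(r−a)}`, equivalently `h_t(r)` converges to
this value as `t → ∞`. -/
theorem cir_infinite_horizon (a D μ r : ℝ)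
    (ha : 0 < a) (hD : 0 < D) (hμ : 0 < μ) (hr : a < r) :
    (∫ τ in Set.Ioi (0 : ℝ), kappa a D τ r * Real.exp (-(μ * τ)) =
      (a / r) * Real.exp (-(Real.sqrt (μ / D) * (r - a)))) ∧
    Filter.Tendsto (fun t => cir a D μ t r) Filter.atTop
      (nhds ((a / r) * Real.exp (-(Real.sqrt (μ / D) * (r - a))))) :=
  cir_infinite_horizon_general a D μ r hD hμ hr
end
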